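/- arXiv:1108.4902 — 8 statements merged into one kernel-verified Lean document; each statement's English description precedes it below -/
import Mathlib

section
/- If x, y, z are elements of Z_2^n with z strictly smaller than x+y in the lexicographic order, then z can be written as x'+y' for some x' ≤ x and y' ≤ y in the lexicographic order. Consequently, the Minkowski sum of two lexicographic initial segments of Z_2^n is again a lexicographic initial segment. -/
open Finset Pointwise

/-- The natural number encoding of `x ∈ (ZMod 2)^n`; the lexicographic order
(comparing the largest differing coordinate) corresponds to `<` on these values. -/
def lexNat {n : ℕ} (x : Fin n → ZMod 2) : ℕ := ∑ i, (x i).val * 2 ^ (i : ℕ)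

/-- The initial segment of size `k` of a finite set `T ⊆ (ZMod 2)^n`
with respect to the lexicographic order: the `k` lexicographically smallest elements of `T`. -/
def initSeg {n : ℕ} (T : Finset (Fin n → ZMod 2)) (k : ℕ) : Finset (Fin n → ZMod 2) :=
  T.filter fun x => (T.filter fun y => lexNat y < lexNat x).card < k

/-!
Through `lexNat`, the lexicographic order on `(ZMod 2)^n` becomes `<` on `ℕ` and addition
becomes bitwise xor. If `c < a ^^^ b`, look at the top bit where `c` and `a ^^^ b` differ: exactly
one of `a`, `b` has a one there, say `a`, and then `c ^^^ b < a` (`Nat.lt_xor_cases`), so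
`c = (c ^^^ b) ^^^ b` is the required decomposition. Consequently the Minkowski sum of two
lexicographically downward closed sets is downward closed, and such a set is an initial segment.
-/

namespace LexZMod2

variable {n : ℕ}

-- `ZMod 2` is definitionally `Fin 2`, so `lexNat` is Mathlib's base-`2` digit equivalence.
def lexEquiv (n : ℕ) : (Fin n → ZMod 2) ≃ Fin (2 ^ n) := finFunctionFinEquiv

lemma lexEquiv_apply (x : Fin n → ZMod 2) : (lexEquiv n x : ℕ) = lexNat x := rfl

lemma lexNat_injective : Function.Injective (lexNat (n := n)) :=
  Fin.val_injective.comp (lexEquiv n).injective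

lemma lexNat_lt_two_pow (x : Fin n → ZMod 2) : lexNat x < 2 ^ n := (lexEquiv n x).isLt

lemma exists_lexNat_eq {m : ℕ} (hm : m < 2 ^ n) : ∃ x : Fin n → ZMod 2, lexNat x = m :=
  ⟨(lexEquiv n).symm ⟨m, hm⟩, by rw [← lexEquiv_apply, Equiv.apply_symm_apply]⟩

lemma val_eq_lexNat_div_mod (x : Fin n → ZMod 2) (i : Fin n) :
    (x i).val = lexNat x / 2 ^ (i : ℕ) % 2 := by
  conv_lhs => rw [← (lexEquiv n).symm_apply_apply x]
  rfl

lemma testBit_lexNat (x : Fin n → ZMod 2) (i : Fin n) :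
    (lexNat x).testBit i = decide (x i = 1) := by
  rw [Nat.testBit_eq_decide_div_mod_eq, ← val_eq_lexNat_div_mod]
  generalize x i = a
  revert a
  decide

lemma lexNat_add (x y : Fin n → ZMod 2) : lexNat (x + y) = lexNat x ^^^ lexNat y := by
  refine Nat.eq_of_testBit_eq fun j => ?_
  by_cases hj : j < n
  · have bit_add : ∀ a b : ZMod 2, decide (a + b = 1) = (decide (a = 1) ^^ decide (b = 1)) := by
      decide
    simpa only [Nat.testBit_xor, testBit_lexNat _ ⟨j, hj⟩, Pi.add_apply] using bit_add _ _
  · have hle : 2 ^ n ≤ 2 ^ j := Nat.pow_le_pow_right two_pos (not_lt.mp hj)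
    have hlt (m : ℕ) (hm : m < 2 ^ n) : m.testBit j = false :=
      Nat.testBit_lt_two_pow (hm.trans_le hle)
    rw [hlt _ (lexNat_lt_two_pow _),
      hlt _ (Nat.xor_lt_two_pow (lexNat_lt_two_pow x) (lexNat_lt_two_pow y))]

theorem exists_add_eq_of_lexNat_lt_lexNat_add {x y z : Fin n → ZMod 2}
    (h : lexNat z < lexNat (x + y)) :
    ∃ x' y' : Fin n → ZMod 2, lexNat x' ≤ lexNat x ∧ lexNat y' ≤ lexNat y ∧ z = x' + y' := by
  rw [lexNat_add] at h
  rcases Nat.lt_xor_cases h with hx | hy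
  · obtain ⟨x', hx'⟩ := exists_lexNat_eq (hx.trans (lexNat_lt_two_pow x))
    refine ⟨x', y, hx' ▸ hx.le, le_rfl, lexNat_injective ?_⟩
    rw [lexNat_add, hx', Nat.xor_assoc, Nat.xor_self, Nat.xor_zero]
  · obtain ⟨y', hy'⟩ := exists_lexNat_eq (hy.trans (lexNat_lt_two_pow y))
    refine ⟨x, y', le_rfl, hy' ▸ hy.le, lexNat_injective ?_⟩
    rw [lexNat_add, hy', Nat.xor_comm (lexNat z), ← Nat.xor_assoc, Nat.xor_self, Nat.zero_xor]

lemma card_filter_lexNat_lt (x : Fin n → ZMod 2) :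
    #((univ : Finset (Fin n → ZMod 2)).filter fun y => lexNat y < lexNat x) = lexNat x := by
  conv_rhs => rw [← lexEquiv_apply, ← Fin.card_Iio (lexEquiv n x)]
  rw [← card_map (lexEquiv n).toEmbedding]
  congr 1
  ext i
  simp [← lexEquiv_apply]

lemma initSeg_univ (k : ℕ) :
    initSeg (univ : Finset (Fin n → ZMod 2)) k = univ.filter fun x => lexNat x < k := by
  simp only [initSeg, card_filter_lexNat_lt]

def IsLexLowerSet (S : Finset (Fin n → ZMod 2)) : Prop :=
  ∀ ⦃x⦄, x ∈ S → ∀ ⦃y⦄, lexNat y ≤ lexNat x → y ∈ S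

lemma isLexLowerSet_filter_lexNat_lt (k : ℕ) :
    IsLexLowerSet ((univ : Finset (Fin n → ZMod 2)).filter fun x => lexNat x < k) := by
  intro x hx y hyx
  simp only [mem_filter, mem_univ, true_and] at hx ⊢
  exact hyx.trans_lt hx

lemma IsLexLowerSet.add {A B : Finset (Fin n → ZMod 2)} (hA : IsLexLowerSet A)
    (hB : IsLexLowerSet B) : IsLexLowerSet (A + B) := by
  rintro _ hs z hz
  obtain ⟨x, hx, y, hy, rfl⟩ := mem_add.mp hs
  rcases hz.lt_or_eq with hlt | heq
  · obtain ⟨x', y', hx', hy', rfl⟩ := exists_add_eq_of_lexNat_lt_lexNat_add hlt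
    exact add_mem_add (hA hx hx') (hB hy hy')
  · exact lexNat_injective heq ▸ add_mem_add hx hy

lemma IsLexLowerSet.exists_eq_filter_lexNat_lt {S : Finset (Fin n → ZMod 2)}
    (hS : IsLexLowerSet S) : ∃ c, S = univ.filter fun x => lexNat x < c := by
  rcases S.eq_empty_or_nonempty with rfl | hne
  · exact ⟨0, by simp⟩
  obtain ⟨s, hs, hmax⟩ := S.exists_max_image lexNat hne
  refine ⟨lexNat s + 1, ext fun x => ?_⟩
  simp only [mem_filter, mem_univ, true_and, Nat.lt_succ_iff]
  exact ⟨hmax x, (hS hs ·)⟩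

end LexZMod2

open LexZMod2 in
theorem stmt0 {n : ℕ} :
    (∀ x y z : Fin n → ZMod 2, lexNat z < lexNat (x + y) →
      ∃ x' y' : Fin n → ZMod 2, lexNat x' ≤ lexNat x ∧ lexNat y' ≤ lexNat y ∧ z = x' + y') ∧
    (∀ a b : ℕ, ∃ c : ℕ,
      initSeg (Finset.univ : Finset (Fin n → ZMod 2)) a + initSeg Finset.univ b
        = initSeg Finset.univ c) := by
  refine ⟨fun x y z h => exists_add_eq_of_lexNat_lt_lexNat_add h, fun a b => ?_⟩
  simp only [initSeg_univ]
  exact ((isLexLowerSet_filter_lexNat_lt a).add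
    (isLexLowerSet_filter_lexNat_lt b)).exists_eq_filter_lexNat_lt
end

section
/- The Hopf–Stiefel function defined by a ∘ b = |IS(a) + IS(b)| (where IS denotes lexicographic initial segments of Z_2^n for n large enough) satisfies the sub-distributive law: a ∘ (b₁ + b₂) ≤ a ∘ b₁ + a ∘ b₂ for all positive integers a, b₁, b₂. -/
/-!
Reading `x : (ZMod 2)^n` as the binary number `lexNat x` turns addition into XOR and the
initial segment `IS(k)` into `{0, …, k - 1}`, so `a ∘ b` is the number of values `x ^^^ y`
with `x < a`, `y < b`. Splitting off the last bit shows that these values form the interval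
`[0, hsRec a b)`, where `hsRec` satisfies the Hopf–Stiefel recursion
`a ∘ b = min (a + b - 1) (2 (⌈a/2⌉ ∘ ⌈b/2⌉))`. Sub-distributivity follows from the recursion
by induction: if `a ∘ bᵢ = a + bᵢ - 1` for some `i` the trivial bound `a ∘ (b₁ + b₂) ≤ a + b₁ + b₂ - 1`
suffices; otherwise both `a ∘ bᵢ` are given by the halving branch, and
`⌈(b₁ + b₂)/2⌉ ≤ ⌈b₁/2⌉ + ⌈b₂/2⌉` together with monotonicity reduces to the halved instance.
-/

open Finset Pointwise

/-- The Hopf–Stiefel function `a ∘ b = |IS(a) + IS(b)|`, computed in `(ZMod 2)^(a+b)`,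
a dimension large enough for the value to be the stable one. -/
def hs (a b : ℕ) : ℕ :=
  (initSeg (Finset.univ : Finset (Fin (a + b) → ZMod 2)) a + initSeg Finset.univ b).card

namespace HopfStiefel

lemma xor_eq_two_mul_add (x y : ℕ) : x ^^^ y = 2 * (x / 2 ^^^ y / 2) + (x + y) % 2 := by
  rw [← Nat.xor_div_two, ← Nat.xor_mod_two_eq, Nat.div_add_mod]

lemma two_mul_add_xor_two_mul_add {d e : ℕ} (u v : ℕ) (hd : d < 2) (he : e < 2) :
    (2 * u + d) ^^^ (2 * v + e) = 2 * (u ^^^ v) + (d + e) % 2 := by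
  rw [xor_eq_two_mul_add, show (2 * u + d) / 2 = u by omega, show (2 * v + e) / 2 = v by omega]
  omega

lemma two_mul_add_xor_eq {u v z d e : ℕ} (hd : d < 2) (he : e < 2) (huv : u ^^^ v = z / 2)
    (hde : (d + e) % 2 = z % 2) : (2 * u + d) ^^^ (2 * v + e) = z := by
  rw [two_mul_add_xor_two_mul_add u v hd he, huv]
  omega

lemma xor_le_add (x y : ℕ) : x ^^^ y ≤ x + y := by
  rcases Nat.eq_zero_or_pos (x + y) with h | h
  · simp_all
  · have := xor_le_add (x / 2) (y / 2)
    rw [xor_eq_two_mul_add]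
    omega
termination_by x + y

/-- A carry in `u + v` is a common bit of `u` and `v`; clearing it in both keeps `u ^^^ v`. -/
lemma exists_lt_lt_xor_eq_of_xor_lt_add {u v : ℕ} (h : u ^^^ v < u + v) :
    ∃ u' < u, ∃ v' < v, u' ^^^ v' = u ^^^ v := by
  by_cases hodd : u % 2 = 1 ∧ v % 2 = 1
  · refine ⟨u - 1, by omega, v - 1, by omega, ?_⟩
    rw [show u - 1 = 2 * (u / 2) + 0 by omega, show v - 1 = 2 * (v / 2) + 0 by omega,
      xor_eq_two_mul_add u v, two_mul_add_xor_two_mul_add _ _ (by omega) (by omega)]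
    omega
  · have hhalf : u / 2 ^^^ v / 2 < u / 2 + v / 2 := by
      rw [xor_eq_two_mul_add] at h
      omega
    obtain ⟨p, hp, q, hq, hpq⟩ := exists_lt_lt_xor_eq_of_xor_lt_add hhalf
    refine ⟨2 * p + u % 2, by omega, 2 * q + v % 2, by omega, ?_⟩
    rw [two_mul_add_xor_two_mul_add _ _ (Nat.mod_lt _ two_pos) (Nat.mod_lt _ two_pos), hpq,
      xor_eq_two_mul_add u v]
    omega
termination_by u + v
decreasing_by omega

/-- The Hopf–Stiefel recursion; only meaningful for positive arguments. -/
def hsRec (a b : ℕ) : ℕ :=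
  if a ≤ 1 ∨ b ≤ 1 then a + b - 1 else min (a + b - 1) (2 * hsRec ((a + 1) / 2) ((b + 1) / 2))
termination_by a + b
decreasing_by omega

lemma hsRec_of_le_one {a b : ℕ} (h : a ≤ 1 ∨ b ≤ 1) : hsRec a b = a + b - 1 := by
  rw [hsRec, if_pos h]

lemma hsRec_of_two_le {a b : ℕ} (ha : 2 ≤ a) (hb : 2 ≤ b) :
    hsRec a b = min (a + b - 1) (2 * hsRec ((a + 1) / 2) ((b + 1) / 2)) := by
  rw [hsRec, if_neg (by omega)]

lemma hsRec_le (a b : ℕ) : hsRec a b ≤ a + b - 1 := by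
  by_cases h : a ≤ 1 ∨ b ≤ 1
  · rw [hsRec_of_le_one h]
  · rw [hsRec_of_two_le (by omega) (by omega)]
    exact min_le_left _ _

lemma hsRec_le_two_mul {a b : ℕ} (ha : 2 ≤ a) (hb : 2 ≤ b) :
    hsRec a b ≤ 2 * hsRec ((a + 1) / 2) ((b + 1) / 2) := by
  rw [hsRec_of_two_le ha hb]
  exact min_le_right _ _

lemma hsRec_eq_two_mul_of_lt {a b : ℕ} (h : hsRec a b < a + b - 1) :
    2 ≤ a ∧ 2 ≤ b ∧ hsRec a b = 2 * hsRec ((a + 1) / 2) ((b + 1) / 2) := by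
  by_cases hab : a ≤ 1 ∨ b ≤ 1
  · rw [hsRec_of_le_one hab] at h
    omega
  · rw [hsRec_of_two_le (by omega) (by omega)] at h ⊢
    exact ⟨by omega, by omega, min_eq_right (by omega)⟩

lemma max_le_hsRec {a b : ℕ} (ha : 0 < a) (hb : 0 < b) : max a b ≤ hsRec a b := by
  by_cases h : a ≤ 1 ∨ b ≤ 1
  · rw [hsRec_of_le_one h]
    omega
  · have := max_le_hsRec (a := (a + 1) / 2) (b := (b + 1) / 2) (by omega) (by omega)
    rw [hsRec_of_two_le (by omega) (by omega)]
    omega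
termination_by a + b
decreasing_by omega

lemma hsRec_mono_right {a b b' : ℕ} (ha : 0 < a) (hb : 0 < b) (hbb' : b ≤ b') :
    hsRec a b ≤ hsRec a b' := by
  by_cases h : a ≤ 1 ∨ b ≤ 1
  · have := max_le_hsRec ha (hb.trans_le hbb')
    have := hsRec_le a b'
    rw [hsRec_of_le_one h]
    omega
  · have := hsRec_mono_right (a := (a + 1) / 2) (b := (b + 1) / 2) (b' := (b' + 1) / 2)
      (by omega) (by omega) (by omega)
    rw [hsRec_of_two_le (b := b) (by omega) (by omega),
      hsRec_of_two_le (b := b') (by omega) (by omega)]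
    omega
termination_by a + b'
decreasing_by omega

lemma hsRec_add_right_le {a b₁ b₂ : ℕ} (ha : 0 < a) (hb₁ : 0 < b₁) (hb₂ : 0 < b₂) :
    hsRec a (b₁ + b₂) ≤ hsRec a b₁ + hsRec a b₂ := by
  have htriv := hsRec_le a (b₁ + b₂)
  rcases (hsRec_le a b₁).eq_or_lt with h₁ | h₁
  · have := max_le_hsRec ha hb₂
    omega
  rcases (hsRec_le a b₂).eq_or_lt with h₂ | h₂
  · have := max_le_hsRec ha hb₁
    omega
  obtain ⟨ha2, hb₁2, e₁⟩ := hsRec_eq_two_mul_of_lt h₁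
  obtain ⟨-, hb₂2, e₂⟩ := hsRec_eq_two_mul_of_lt h₂
  calc hsRec a (b₁ + b₂)
      ≤ 2 * hsRec ((a + 1) / 2) ((b₁ + b₂ + 1) / 2) := hsRec_le_two_mul ha2 (by omega)
    _ ≤ 2 * hsRec ((a + 1) / 2) ((b₁ + 1) / 2 + (b₂ + 1) / 2) := by
      gcongr
      exact hsRec_mono_right (by omega) (by omega) (by omega)
    _ ≤ 2 * (hsRec ((a + 1) / 2) ((b₁ + 1) / 2) + hsRec ((a + 1) / 2) ((b₂ + 1) / 2)) := by
      gcongr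
      exact hsRec_add_right_le (by omega) (by omega) (by omega)
    _ = hsRec a b₁ + hsRec a b₂ := by rw [e₁, e₂]; ring
termination_by a + b₁ + b₂
decreasing_by omega

lemma xor_lt_hsRec {a b x y : ℕ} (hx : x < a) (hy : y < b) : x ^^^ y < hsRec a b := by
  have := xor_le_add x y
  by_cases h : a ≤ 1 ∨ b ≤ 1
  · rw [hsRec_of_le_one h]
    omega
  · have := xor_lt_hsRec (a := (a + 1) / 2) (b := (b + 1) / 2) (x := x / 2) (y := y / 2)
      (by omega) (by omega)
    have := xor_eq_two_mul_add x y
    rw [hsRec_of_two_le (by omega) (by omega)]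
    omega
termination_by a + b
decreasing_by omega

lemma exists_xor_eq_of_lt_hsRec {a b z : ℕ} (ha : 0 < a) (hb : 0 < b) (hz : z < hsRec a b) :
    ∃ x < a, ∃ y < b, x ^^^ y = z := by
  by_cases h : a ≤ 1 ∨ b ≤ 1
  · rw [hsRec_of_le_one h] at hz
    rcases h with h | h
    · exact ⟨0, ha, z, by omega, Nat.zero_xor z⟩
    · exact ⟨z, by omega, 0, hb, Nat.xor_zero z⟩
  rw [hsRec_of_two_le (by omega) (by omega), lt_min_iff] at hz
  obtain ⟨u, hu, v, hv, huv⟩ :=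
    exists_xor_eq_of_lt_hsRec (a := (a + 1) / 2) (b := (b + 1) / 2) (z := z / 2)
      (by omega) (by omega) (by omega)
  by_cases hz2 : z % 2 = 0
  · exact ⟨2 * u + 0, by omega, 2 * v + 0, by omega, two_mul_add_xor_eq (by omega) (by omega) huv
      (by omega)⟩
  by_cases hua : 2 * u + 1 < a
  · exact ⟨2 * u + 1, hua, 2 * v + 0, by omega, two_mul_add_xor_eq (by omega) (by omega) huv
      (by omega)⟩
  by_cases hvb : 2 * v + 1 < b
  · exact ⟨2 * u + 0, by omega, 2 * v + 1, hvb, two_mul_add_xor_eq (by omega) (by omega) huv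
      (by omega)⟩
  -- Now `a = 2u + 1`, `b = 2v + 1` and `z < a + b - 1` forces a carry in `u + v`.
  obtain ⟨u', hu', v', hv', hxor⟩ := exists_lt_lt_xor_eq_of_xor_lt_add (u := u) (v := v) (by omega)
  exact ⟨2 * u' + 1, by omega, 2 * v' + 0, by omega,
    two_mul_add_xor_eq (by omega) (by omega) (hxor.trans huv) (by omega)⟩
termination_by a + b
decreasing_by omega

theorem image₂_xor_range {a b : ℕ} (ha : 0 < a) (hb : 0 < b) :
    image₂ (· ^^^ ·) (range a) (range b) = range (hsRec a b) := by
  ext z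
  simp only [mem_image₂, mem_range]
  constructor
  · rintro ⟨x, hx, y, hy, rfl⟩
    exact xor_lt_hsRec hx hy
  · exact exists_xor_eq_of_lt_hsRec ha hb

lemma lexNat_eq_finFunctionFinEquiv {n : ℕ} (x : Fin n → ZMod 2) :
    lexNat x = finFunctionFinEquiv (x : Fin n → Fin 2) :=
  (finFunctionFinEquiv_apply _).symm

lemma lexNat_injective {n : ℕ} : Function.Injective (lexNat (n := n)) := fun x y h => by
  rw [lexNat_eq_finFunctionFinEquiv, lexNat_eq_finFunctionFinEquiv] at h
  exact finFunctionFinEquiv.injective (Fin.val_injective h)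

lemma lexNat_lt {n : ℕ} (x : Fin n → ZMod 2) : lexNat x < 2 ^ n := by
  rw [lexNat_eq_finFunctionFinEquiv]
  exact Fin.is_lt _

lemma exists_lexNat_eq {n k : ℕ} (hk : k < 2 ^ n) : ∃ x : Fin n → ZMod 2, lexNat x = k :=
  ⟨finFunctionFinEquiv.symm ⟨k, hk⟩, (lexNat_eq_finFunctionFinEquiv _).trans
    (congrArg Fin.val (finFunctionFinEquiv.apply_symm_apply _))⟩

lemma lexNat_succ {n : ℕ} (x : Fin (n + 1) → ZMod 2) :
    lexNat x = (x 0).val + 2 * lexNat (Fin.tail x) := by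
  simp only [lexNat, Fin.sum_univ_succ, Fin.tail, mul_sum, Fin.val_succ, Fin.val_zero, pow_succ]
  congr 1
  · ring
  · exact sum_congr rfl fun _ _ => by ring

lemma lexNat_add {n : ℕ} (x y : Fin n → ZMod 2) : lexNat (x + y) = lexNat x ^^^ lexNat y := by
  induction n with
  | zero => simp [lexNat]
  | succ n ih =>
    rw [lexNat_succ, lexNat_succ x, lexNat_succ y, add_comm (x 0).val, add_comm (y 0).val,
      two_mul_add_xor_two_mul_add _ _ (ZMod.val_lt _) (ZMod.val_lt _), ← ZMod.val_add,
      show Fin.tail (x + y) = Fin.tail x + Fin.tail y from rfl, ih]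
    exact add_comm _ _

lemma image_lexNat_filter_lt {n m : ℕ} (hm : m ≤ 2 ^ n) :
    ((univ : Finset (Fin n → ZMod 2)).filter fun y => lexNat y < m).image lexNat = range m := by
  ext k
  simp only [mem_image, mem_filter, mem_univ, true_and, mem_range]
  constructor
  · rintro ⟨x, hx, rfl⟩
    exact hx
  · intro hk
    obtain ⟨x, rfl⟩ := exists_lexNat_eq (hk.trans_le hm)
    exact ⟨x, hk, rfl⟩

lemma card_filter_lexNat_lt {n m : ℕ} (hm : m ≤ 2 ^ n) :
    ((univ : Finset (Fin n → ZMod 2)).filter fun y => lexNat y < m).card = m := by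
  rw [← card_image_of_injective _ lexNat_injective, image_lexNat_filter_lt hm, card_range]

lemma initSeg_univ {n : ℕ} (k : ℕ) :
    initSeg (univ : Finset (Fin n → ZMod 2)) k = univ.filter fun x => lexNat x < k := by
  ext x
  simp only [initSeg, mem_filter, mem_univ, true_and, card_filter_lexNat_lt (lexNat_lt x).le]

theorem card_initSeg_add_initSeg {n a b : ℕ} (ha : 0 < a) (hb : 0 < b) (han : a ≤ 2 ^ n)
    (hbn : b ≤ 2 ^ n) :
    (initSeg (univ : Finset (Fin n → ZMod 2)) a + initSeg univ b).card = hsRec a b := by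
  rw [initSeg_univ, initSeg_univ]
  change #(image₂ (· + ·) _ _) = _
  rw [← card_image_of_injective _ lexNat_injective, image_image₂_distrib lexNat_add,
    image_lexNat_filter_lt han, image_lexNat_filter_lt hbn, image₂_xor_range ha hb, card_range]

theorem hs_eq_hsRec {a b : ℕ} (ha : 0 < a) (hb : 0 < b) : hs a b = hsRec a b :=
  card_initSeg_add_initSeg ha hb
    (Nat.lt_two_pow_self.le.trans (Nat.pow_le_pow_right two_pos (Nat.le_add_right a b)))
    (Nat.lt_two_pow_self.le.trans (Nat.pow_le_pow_right two_pos (Nat.le_add_left b a)))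

end HopfStiefel

theorem stmt1 (a b₁ b₂ : ℕ) (ha : 0 < a) (hb₁ : 0 < b₁) (hb₂ : 0 < b₂) :
    hs a (b₁ + b₂) ≤ hs a b₁ + hs a b₂ := by
  rw [HopfStiefel.hs_eq_hsRec ha (by omega), HopfStiefel.hs_eq_hsRec ha hb₁,
    HopfStiefel.hs_eq_hsRec ha hb₂]
  exact HopfStiefel.hsRec_add_right_le ha hb₁ hb₂
end

section
/- The Hopf–Stiefel function a ∘ b = |IS(a) + IS(b)| satisfies the recursions: for a, b ≤ 2^n, a ∘ (2^n + b) = 2^n + a ∘ b, and (2^n + a) ∘ (2^n + b) = 2^{n+1}. -/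
open Finset Pointwise

/-! Identifying `(ZMod 2)^m` with `[0, 2^m)` through the binary expansion `lexNat`, the
lexicographic order becomes the order of `ℕ`, initial segments become `range a`, and vector
addition becomes bitwise xor, so `a ∘ b = #{s ^^^ u | s < a, u < b}`.

For `s, v < 2^n` we have `s ^^^ (2^n + v) = 2^n + (s ^^^ v)`. Hence splitting `range (2^n + b)`
into `range (2^n)` and `2^n + range b` splits the xor set of `a` and `2^n + b` into `range (2^n)`
(which it contains since `0 < a`) and a disjoint shifted copy of the xor set of `a` and `b`.
When both arguments exceed `2^n`, the xor set contains `0 ^^^ t` and `2^n ^^^ t` for every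
`t < 2^n`, so it is all of `range (2^(n+1))`. -/

section lexNat

variable {m : ℕ}

-- `ZMod 2` is definitionally `Fin 2`, and `lexNat` is then Mathlib's base-2 digit equivalence.
lemma lexNat_eq_finFunctionFinEquiv (x : Fin m → Fin 2) :
    lexNat x = finFunctionFinEquiv x := rfl

lemma lexNat_lt_two_pow (x : Fin m → ZMod 2) : lexNat x < 2 ^ m :=
  (finFunctionFinEquiv (m := 2) x).isLt

lemma lexNat_injective : Function.Injective (lexNat (n := m)) :=
  Fin.val_injective.comp finFunctionFinEquiv.injective

lemma lexNat_surjective {t : ℕ} (ht : t < 2 ^ m) : ∃ x : Fin m → ZMod 2, lexNat x = t :=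
  ⟨finFunctionFinEquiv.symm ⟨t, ht⟩, by
    rw [lexNat_eq_finFunctionFinEquiv, Equiv.apply_symm_apply]⟩

lemma testBit_lexNat (x : Fin m → ZMod 2) (i : Fin m) :
    (lexNat x).testBit i = decide (x i = 1) := by
  have hdigit : lexNat x / 2 ^ (i : ℕ) % 2 = (x i).val := by
    rw [lexNat_eq_finFunctionFinEquiv x, ← finFunctionFinEquiv_symm_apply_val]
    exact congrArg (fun f : Fin m → Fin 2 => (f i : ℕ)) (finFunctionFinEquiv.symm_apply_apply x)
  rw [Nat.testBit_eq_decide_div_mod_eq, hdigit]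
  generalize x i = u
  revert u
  decide

lemma lexNat_add (x y : Fin m → ZMod 2) : lexNat (x + y) = lexNat x ^^^ lexNat y := by
  refine Nat.eq_of_testBit_eq fun j => ?_
  by_cases hj : j < m
  · rw [Nat.testBit_xor, testBit_lexNat (x + y) ⟨j, hj⟩, testBit_lexNat x ⟨j, hj⟩,
      testBit_lexNat y ⟨j, hj⟩, Pi.add_apply]
    generalize x ⟨j, hj⟩ = u
    generalize y ⟨j, hj⟩ = v
    revert u v
    decide
  · have hle : 2 ^ m ≤ 2 ^ j := Nat.pow_le_pow_right two_pos (not_lt.1 hj)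
    rw [Nat.testBit_lt_two_pow ((lexNat_lt_two_pow _).trans_le hle),
      Nat.testBit_lt_two_pow
        ((Nat.xor_lt_two_pow (lexNat_lt_two_pow x) (lexNat_lt_two_pow y)).trans_le hle)]

lemma image_lexNat_filter_lt {c : ℕ} (hc : c ≤ 2 ^ m) :
    (univ.filter fun x : Fin m → ZMod 2 => lexNat x < c).image lexNat = range c := by
  ext t
  simp only [mem_image, mem_filter, mem_univ, true_and, mem_range]
  constructor
  · rintro ⟨x, hx, rfl⟩
    exact hx
  · intro ht
    obtain ⟨x, rfl⟩ := lexNat_surjective (ht.trans_le hc)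
    exact ⟨x, ht, rfl⟩

lemma card_filter_lexNat_lt (x : Fin m → ZMod 2) :
    #(univ.filter fun y : Fin m → ZMod 2 => lexNat y < lexNat x) = lexNat x := by
  rw [← card_image_of_injective _ lexNat_injective,
    image_lexNat_filter_lt (lexNat_lt_two_pow x).le, card_range]

lemma initSeg_univ (k : ℕ) :
    initSeg (univ : Finset (Fin m → ZMod 2)) k = univ.filter fun x => lexNat x < k :=
  filter_congr fun x _ => by rw [card_filter_lexNat_lt]

lemma image_lexNat_add (A B : Finset (Fin m → ZMod 2)) :
    (A + B).image lexNat = image₂ (· ^^^ ·) (A.image lexNat) (B.image lexNat) := by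
  change (image₂ (· + ·) A B).image lexNat = _
  rw [image_image₂, image₂_image_left, image₂_image_right]
  exact image₂_congr fun x _ y _ => lexNat_add x y

end lexNat

lemma hs_eq_card_image₂_xor (a b : ℕ) :
    hs a b = #(image₂ (· ^^^ ·) (range a) (range b)) := by
  have hab : ∀ c ≤ a + b, c ≤ 2 ^ (a + b) := fun c hc => hc.trans Nat.lt_two_pow_self.le
  rw [hs, ← card_image_of_injective _ lexNat_injective, image_lexNat_add, initSeg_univ,
    initSeg_univ, image_lexNat_filter_lt (hab a (by omega)),
    image_lexNat_filter_lt (hab b (by omega))]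

lemma xor_two_pow_add {n s v : ℕ} (hs : s < 2 ^ n) (hv : v < 2 ^ n) :
    s ^^^ (2 ^ n + v) = 2 ^ n + (s ^^^ v) := by
  refine Nat.eq_of_testBit_eq fun j => ?_
  have hsv := Nat.xor_lt_two_pow hs hv
  rw [← mul_one (2 ^ n), Nat.testBit_xor, Nat.testBit_two_pow_mul_add _ hv,
    Nat.testBit_two_pow_mul_add _ hsv, Nat.testBit_xor]
  by_cases hj : j < n
  · simp [hj]
  · simp [hj, Nat.testBit_lt_two_pow (hs.trans_le (Nat.pow_le_pow_right two_pos (not_lt.1 hj)))]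

lemma image₂_xor_map_addLeftEmbedding_two_pow {n : ℕ} {s t : Finset ℕ}
    (hs : ∀ x ∈ s, x < 2 ^ n) (ht : ∀ y ∈ t, y < 2 ^ n) :
    image₂ (· ^^^ ·) s (t.map (addLeftEmbedding (2 ^ n)))
      = (image₂ (· ^^^ ·) s t).map (addLeftEmbedding (2 ^ n)) := by
  simp only [map_eq_image, addLeftEmbedding_apply, image₂_image_right, image_image₂]
  exact image₂_congr fun x hx y hy => xor_two_pow_add (hs x hx) (ht y hy)

lemma image₂_xor_range_range_two_pow {n a : ℕ} (ha : 0 < a) (han : a ≤ 2 ^ n) :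
    image₂ (· ^^^ ·) (range a) (range (2 ^ n)) = range (2 ^ n) := by
  ext t
  simp only [mem_image₂, mem_range]
  constructor
  · rintro ⟨s, hs, u, hu, rfl⟩
    exact Nat.xor_lt_two_pow (hs.trans_le han) hu
  · intro ht
    exact ⟨0, ha, t, ht, Nat.zero_xor t⟩

lemma card_image₂_xor_range_two_pow_add {n a b : ℕ} (ha : 0 < a) (han : a ≤ 2 ^ n)
    (hbn : b ≤ 2 ^ n) :
    #(image₂ (· ^^^ ·) (range a) (range (2 ^ n + b)))
      = 2 ^ n + #(image₂ (· ^^^ ·) (range a) (range b)) := by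
  rw [range_add, image₂_union_right, image₂_xor_range_range_two_pow ha han,
    image₂_xor_map_addLeftEmbedding_two_pow (fun x hx => (mem_range.1 hx).trans_le han)
      (fun y hy => (mem_range.1 hy).trans_le hbn),
    card_union_of_disjoint (disjoint_range_addLeftEmbedding _ _), card_range, card_map]

lemma image₂_xor_range_two_pow_add {n a b : ℕ} (ha : 0 < a) (han : a ≤ 2 ^ n)
    (hbn : b ≤ 2 ^ n) :
    image₂ (· ^^^ ·) (range (2 ^ n + a)) (range (2 ^ n + b)) = range (2 ^ (n + 1)) := by
  have htwo : 2 ^ (n + 1) = 2 ^ n + 2 ^ n := by ring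
  ext t
  simp only [mem_image₂, mem_range]
  constructor
  · rintro ⟨s, hs, u, hu, rfl⟩
    exact Nat.xor_lt_two_pow (n := n + 1) (by omega) (by omega)
  · intro ht
    by_cases hlow : t < 2 ^ n
    · exact ⟨0, by omega, t, by omega, Nat.zero_xor t⟩
    · refine ⟨2 ^ n, by omega, t - 2 ^ n, by omega, ?_⟩
      have hhigh := xor_two_pow_add (s := t - 2 ^ n) (by omega) (Nat.two_pow_pos n)
      rw [add_zero, Nat.xor_zero] at hhigh
      rw [Nat.xor_comm, hhigh]
      omega

theorem stmt2_general (n a b : ℕ) (ha : 0 < a) (han : a ≤ 2 ^ n) (hbn : b ≤ 2 ^ n) :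
    hs a (2 ^ n + b) = 2 ^ n + hs a b ∧ hs (2 ^ n + a) (2 ^ n + b) = 2 ^ (n + 1) := by
  simp only [hs_eq_card_image₂_xor]
  exact ⟨card_image₂_xor_range_two_pow_add ha han hbn,
    by rw [image₂_xor_range_two_pow_add ha han hbn, card_range]⟩

theorem stmt2 (n a b : ℕ) (ha : 0 < a) (hb : 0 < b) (han : a ≤ 2 ^ n) (hbn : b ≤ 2 ^ n) :
    hs a (2 ^ n + b) = 2 ^ n + hs a b ∧ hs (2 ^ n + a) (2 ^ n + b) = 2 ^ (n + 1) :=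
  stmt2_general n a b ha han hbn
end

section
/- Lower bound via independent points: for every integer t ≥ 1, the set A = {0, e_1, ..., e_t} ⊆ Z_2^t satisfies |A| = t+1, |A+A| = C(t,2) + t + 1, and ⟨A⟩ = Z_2^t. Consequently F((C(t,2)+t+1)/(t+1)) ≥ 2^t/(t+1). -/
/-!
`A = {0, e_1, …, e_t}` is the Hamming ball of radius 1 in `(ZMod 2)^t`, so `A + A` is the Hamming
ball of radius 2, of size `1 + t + C(t,2)`; and `A` contains `0` and a basis, so `⟨A⟩` is
everything. What remains is that the set whose `sSup` defines `F(K)` is bounded above (otherwise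
`sSup` returns a junk value). By Plünnecke–Ruzsa `|4A| ≤ K⁴|A|`, so Ruzsa's covering lemma gives
`3A ⊆ X + 2A` with `|X| ≤ K⁴`. Then `span X + 2A` is closed under addition, hence contains
`span (2A)`, which in characteristic 2 is the direction of `⟨A⟩`; thus `|⟨A⟩| ≤ 2^{K⁴} K |A|`.
-/

open Finset Pointwise

/-- The Freiman–Ruzsa constant: `F(K) = sup {|⟨A⟩|/|A| : A ⊆ (ZMod 2)^n, n ∈ ℕ,
|A+A|/|A| ≤ K}`, where `⟨A⟩` is the affine span. -/
noncomputable def FRconst (K : ℝ) : ℝ :=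
  sSup {r : ℝ | ∃ (n : ℕ) (A : Finset (Fin n → ZMod 2)), A.Nonempty ∧
    ((A + A).card : ℝ) ≤ K * A.card ∧
    r = (Nat.card (affineSpan (ZMod 2) (A : Set (Fin n → ZMod 2))) : ℝ) / A.card}

open scoped symmDiff

lemma Finset.card_nsmul_le_of_card_add_le {G : Type*} [AddCommGroup G] [DecidableEq G]
    {A : Finset G} (hA : A.Nonempty) {K : ℝ} (hK : #(A + A) ≤ K * #A) (n : ℕ) :
    #(n • A) ≤ K ^ n * #A := by
  have hA₀ : (0 : ℝ) < #A := mod_cast hA.card_pos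
  have hPR : (#(n • A) : ℝ) ≤ (#(A + A) / #A : ℝ) ^ n * #A := by
    have h := NNRat.cast_le (K := ℝ) |>.2 (pluennecke_ruzsa_inequality_nsmul_add hA A n)
    push_cast at h
    exact h
  exact hPR.trans (by gcongr; rwa [div_le_iff₀ hA₀])

lemma AffineSubspace.natCard_eq_natCard_direction {k V P : Type*} [Ring k] [AddCommGroup V]
    [Module k V] [AddTorsor V P] {s : AffineSubspace k P} {p : P} (hp : p ∈ s) :
    Nat.card s = Nat.card s.direction :=
  Nat.card_congr
    { toFun x := ⟨(x : P) -ᵥ p, vsub_mem_direction x.2 hp⟩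
      invFun v := ⟨v +ᵥ p, vadd_mem_of_mem_direction v.2 hp⟩
      left_inv _ := Subtype.ext (vsub_vadd _ _)
      right_inv _ := Subtype.ext (vadd_vsub _ _) }

lemma affineSpan_insert_zero_range_single {k ι : Type*} [Ring k] [Finite ι] [DecidableEq ι] :
    affineSpan k (insert 0 (Set.range fun i : ι => Pi.single i (1 : k))) = ⊤ := by
  have h := (Pi.basisFun k ι).span_eq
  rw [show ⇑(Pi.basisFun k ι) = fun i => Pi.single i 1 from funext (Pi.basisFun_apply k ι)] at h
  apply SetLike.coe_injective
  rw [affineSpan_insert_zero, h]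
  rfl

namespace ZModModule

variable {G : Type*} [AddCommGroup G] [Module (ZMod 2) G]

lemma finset_sub_eq_add [DecidableEq G] (s t : Finset G) : s - t = s + t := by
  ext; simp [mem_sub, mem_add, sub_eq_add]

lemma vectorSpan_eq_span_add_self (s : Set G) :
    vectorSpan (ZMod 2) s = Submodule.span (ZMod 2) (s + s) := by
  rw [vectorSpan_def]
  congr 1
  ext; simp [Set.mem_vsub, Set.mem_add, sub_eq_add]

lemma natCard_span_le (F : Finset G) :
    Nat.card (Submodule.span (ZMod 2) (F : Set G)) ≤ 2 ^ #F := by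
  rw [Module.natCard_eq_pow_finrank (K := ZMod 2), Nat.card_zmod]
  exact Nat.pow_le_pow_right two_pos (finrank_span_finset_le_card F)

lemma exists_add_add_subset_add [DecidableEq G] {A : Finset G} (hA : A.Nonempty) {K : ℝ}
    (hK : #(A + A) ≤ K * #A) : ∃ F : Finset G, #F ≤ K ^ 4 ∧ A + A + A ⊆ F + (A + A) := by
  have h4 : (#(A + A + A + A) : ℝ) ≤ K ^ 4 * #A := by
    simpa [succ_nsmul] using card_nsmul_le_of_card_add_le hA hK 4
  obtain ⟨F, -, hF, hcov⟩ := ruzsa_covering_add hA h4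
  exact ⟨F, hF, by rwa [finset_sub_eq_add] at hcov⟩

lemma span_add_self_subset {A F : Set G} (hA : A.Nonempty) (hcov : A + A + A ⊆ F + (A + A)) :
    (Submodule.span (ZMod 2) (A + A) : Set G) ⊆ Submodule.span (ZMod 2) F + (A + A) := by
  set H : Set G := (Submodule.span (ZMod 2) F : Set G)
  have hHH : H + H ⊆ H := Set.add_subset_iff.2 fun x hx y hy => add_mem hx hy
  have hHF : H + F ⊆ H := (Set.add_subset_add_left Submodule.subset_span).trans hHH
  have h3 : H + (A + A + A) ⊆ H + (A + A) := calc
    H + (A + A + A) ⊆ H + (F + (A + A)) := Set.add_subset_add_left hcov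
    _ = H + F + (A + A) := (add_assoc _ _ _).symm
    _ ⊆ H + (A + A) := Set.add_subset_add_right hHF
  have hclosed : H + (A + A) + (H + (A + A)) ⊆ H + (A + A) := calc
    H + (A + A) + (H + (A + A)) = H + H + (A + A + A) + A := by abel
    _ ⊆ H + (A + A + A) + A := by gcongr
    _ ⊆ H + (A + A) + A := by gcongr
    _ = H + (A + A + A) := by abel
    _ ⊆ H + (A + A) := h3
  obtain ⟨a, ha⟩ := hA
  have h0 : (0 : G) ∈ H + (A + A) := by
    simpa [add_self] using
      Set.add_mem_add (zero_mem (Submodule.span (ZMod 2) F)) (Set.add_mem_add ha ha)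
  intro x hx
  induction hx using Submodule.span_induction with
  | mem x hx => exact ⟨0, zero_mem _, x, hx, zero_add x⟩
  | zero => exact h0
  | add x y _ _ hx hy => exact hclosed (Set.add_mem_add hx hy)
  | smul c x _ hx =>
    obtain rfl | rfl : c = 0 ∨ c = 1 := by revert c; decide
    · simpa using h0
    · simpa using hx

theorem natCard_affineSpan_le [DecidableEq G] {A : Finset G} (hA : A.Nonempty) {K : ℝ}
    (hK : #(A + A) ≤ K * #A) :
    (Nat.card (affineSpan (ZMod 2) (A : Set G)) : ℝ) ≤ 2 ^ ⌊K ^ 4⌋₊ * K * #A := by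
  obtain ⟨a, ha⟩ := hA
  obtain ⟨F, hF, hcov⟩ := exists_add_add_subset_add ⟨a, ha⟩ hK
  have : Finite (Submodule.span (ZMod 2) (F : Set G)) := Module.finite_of_finite (ZMod 2)
  have hspan : Nat.card (affineSpan (ZMod 2) (A : Set G)) ≤ 2 ^ #F * #(A + A) := calc
    Nat.card (affineSpan (ZMod 2) (A : Set G))
      = Nat.card (Submodule.span (ZMod 2) ((A : Set G) + (A : Set G))) := by
        rw [AffineSubspace.natCard_eq_natCard_direction (mem_affineSpan _ (mem_coe.2 ha)),
          direction_affineSpan, vectorSpan_eq_span_add_self]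
    _ ≤ Nat.card (Submodule.span (ZMod 2) (F : Set G) + ((A : Set G) + (A : Set G)) : Set G) :=
        Nat.card_mono ((Set.toFinite _).add (Set.toFinite _))
          (span_add_self_subset ⟨a, ha⟩ (by exact_mod_cast hcov))
    _ ≤ Nat.card (Submodule.span (ZMod 2) (F : Set G)) * Nat.card ((A : Set G) + A : Set G) :=
        Set.natCard_add_le
    _ ≤ 2 ^ #F * #(A + A) := by
        rw [← coe_add, Nat.card_coe_set_eq, Set.ncard_coe_finset]
        gcongr
        exact natCard_span_le F
  have hF' : #F ≤ ⌊K ^ 4⌋₊ := Nat.le_floor hF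
  calc (Nat.card (affineSpan (ZMod 2) (A : Set G)) : ℝ) ≤ 2 ^ #F * #(A + A) := mod_cast hspan
    _ ≤ 2 ^ ⌊K ^ 4⌋₊ * (K * #A) := by gcongr; norm_num
    _ = 2 ^ ⌊K ^ 4⌋₊ * K * #A := by ring

end ZModModule

lemma le_FRconst {K : ℝ} {n : ℕ} {A : Finset (Fin n → ZMod 2)} (hA : A.Nonempty)
    (hK : #(A + A) ≤ K * #A) :
    Nat.card (affineSpan (ZMod 2) (A : Set (Fin n → ZMod 2))) / #A ≤ FRconst K := by
  refine le_csSup ⟨2 ^ ⌊K ^ 4⌋₊ * K, ?_⟩ ⟨n, A, hA, hK, rfl⟩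
  rintro _ ⟨m, B, hB, hBK, rfl⟩
  rw [div_le_iff₀ (mod_cast hB.card_pos)]
  exact ZModModule.natCard_affineSpan_le hB hBK

section HammingBall

variable {ι : Type*} [DecidableEq ι]

def indicatorVec (S : Finset ι) : ι → ZMod 2 := fun i => if i ∈ S then 1 else 0

lemma indicatorVec_injective : Function.Injective (indicatorVec (ι := ι)) := by
  intro S T h
  ext i
  have := congrFun h i
  by_cases hS : i ∈ S <;> by_cases hT : i ∈ T <;> simp_all [indicatorVec]

@[simp] lemma indicatorVec_empty : indicatorVec (∅ : Finset ι) = 0 := by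
  ext; simp [indicatorVec]

@[simp] lemma indicatorVec_singleton (i : ι) : indicatorVec {i} = Pi.single i 1 := by
  ext j; simp [indicatorVec, Pi.single_apply]

lemma indicatorVec_symmDiff (S T : Finset ι) :
    indicatorVec (S ∆ T) = indicatorVec S + indicatorVec T := by
  ext i
  by_cases hS : i ∈ S <;> by_cases hT : i ∈ T <;>
    simp [indicatorVec, mem_symmDiff, hS, hT, ZModModule.add_self]

variable [Fintype ι]

def hammingBall (k : ℕ) : Finset (ι → ZMod 2) :=
  (univ.filter fun S : Finset ι => #S ≤ k).image indicatorVec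

lemma card_hammingBall (k : ℕ) :
    #(hammingBall (ι := ι) k) = ∑ j ∈ range (k + 1), (Fintype.card ι).choose j := by
  have hsizes : univ.filter (fun S : Finset ι => #S ≤ k) =
      (range (k + 1)).biUnion fun j => powersetCard j univ := by
    ext S; simp
  rw [hammingBall, card_image_of_injective _ indicatorVec_injective, hsizes,
    card_biUnion ((pairwise_disjoint_powersetCard _).set_pairwise _)]
  simp

lemma hammingBall_add_hammingBall (m n : ℕ) :
    hammingBall (ι := ι) m + hammingBall n = hammingBall (m + n) := by
  ext x
  simp only [hammingBall, mem_add, mem_image, mem_filter, mem_univ, true_and]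
  constructor
  · rintro ⟨_, ⟨S, hS, rfl⟩, _, ⟨T, hT, rfl⟩, rfl⟩
    refine ⟨S ∆ T, ?_, indicatorVec_symmDiff S T⟩
    calc #(S ∆ T) ≤ #(S ∪ T) := card_le_card symmDiff_le_sup
      _ ≤ #S + #T := card_union_le S T
      _ ≤ m + n := add_le_add hS hT
  · rintro ⟨U, hU, rfl⟩
    obtain ⟨S, hSU, hS⟩ := exists_subset_card_eq (min_le_right m #U)
    refine ⟨_, ⟨S, hS.trans_le (min_le_left _ _), rfl⟩, _, ⟨U \ S, ?_, rfl⟩, ?_⟩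
    · rw [card_sdiff_of_subset hSU]; omega
    · rw [← indicatorVec_symmDiff, disjoint_sdiff.symmDiff_eq_sup, sup_eq_union,
        union_sdiff_of_subset hSU]

lemma hammingBall_one :
    hammingBall (ι := ι) 1 = insert 0 (univ.image fun i => Pi.single i (1 : ZMod 2)) := by
  ext x
  simp only [hammingBall, mem_image, mem_filter, mem_univ, true_and, mem_insert,
    Nat.le_one_iff_eq_zero_or_eq_one, card_eq_zero, card_eq_one]
  constructor
  · rintro ⟨S, rfl | ⟨i, rfl⟩, rfl⟩ <;> simp
  · rintro (rfl | ⟨i, rfl⟩)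
    · exact ⟨∅, by simp⟩
    · exact ⟨{i}, by simp⟩

end HammingBall

theorem stmt11_general (t : ℕ) (A : Finset (Fin t → ZMod 2))
    (hA : A = insert 0 (Finset.univ.image fun i => Pi.single i (1 : ZMod 2))) :
    A.card = t + 1 ∧
    (A + A).card = t * (t - 1) / 2 + t + 1 ∧
    affineSpan (ZMod 2) (A : Set (Fin t → ZMod 2)) = ⊤ ∧
    (2 ^ t : ℝ) / (t + 1) ≤ FRconst (((t * (t - 1) / 2 + t + 1 : ℕ) : ℝ) / ((t : ℝ) + 1)) := by
  have hspan : affineSpan (ZMod 2) (A : Set (Fin t → ZMod 2)) = ⊤ := by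
    simpa [hA] using affineSpan_insert_zero_range_single (k := ZMod 2) (ι := Fin t)
  rw [← hammingBall_one] at hA
  subst hA
  have hcard : #(hammingBall (ι := Fin t) 1) = t + 1 := by
    simp [card_hammingBall, sum_range_succ, add_comm]
  have hcard₂ : #(hammingBall (ι := Fin t) 1 + hammingBall 1) = t * (t - 1) / 2 + t + 1 := by
    rw [hammingBall_add_hammingBall, card_hammingBall, Fintype.card_fin, sum_range_succ,
      sum_range_succ, sum_range_one, Nat.choose_zero_right, Nat.choose_one_right,
      Nat.choose_two_right]
    ring
  refine ⟨hcard, hcard₂, hspan, ?_⟩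
  have hF := le_FRconst (K := ((t * (t - 1) / 2 + t + 1 : ℕ) : ℝ) / ((t : ℝ) + 1))
    (A := hammingBall (ι := Fin t) 1) ⟨0, by simp [hammingBall_one]⟩
    (by rw [hcard₂, hcard, Nat.cast_add_one t, div_mul_cancel₀ _ (by positivity)])
  rw [hspan, Nat.card_congr (AffineSubspace.topEquiv _ _ _).toEquiv, Nat.card_fun, Nat.card_zmod,
    Nat.card_fin, hcard] at hF
  exact_mod_cast hF

theorem stmt11 (t : ℕ) (ht : 1 ≤ t) (A : Finset (Fin t → ZMod 2))
    (hA : A = insert 0 (Finset.univ.image fun i => Pi.single i (1 : ZMod 2))) :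
    A.card = t + 1 ∧
    (A + A).card = t * (t - 1) / 2 + t + 1 ∧
    affineSpan (ZMod 2) (A : Set (Fin t → ZMod 2)) = ⊤ ∧
    (2 ^ t : ℝ) / (t + 1) ≤ FRconst (((t * (t - 1) / 2 + t + 1 : ℕ) : ℝ) / ((t : ℝ) + 1)) :=
  stmt11_general t A hA
end

section
/- For nonnegative integers s < t, the set A = {0, e_0, e_1, ..., e_t} ∪ {e_0+e_1, ..., e_0+e_{t−s}} ⊆ Z_2^{t+1} (with basis e_0, e_1, ..., e_t) satisfies |A| = 2(t+1) − s, |A+A| = 2(C(t,2)+t+1) − C(s,2), and A affinely spans Z_2^{t+1}. -/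
open Finset Pointwise

namespace Stmt12Aux

variable {n : ℕ}

def sig (p : Finset (Fin n)) : Fin n → ZMod 2 := ∑ i ∈ p, Pi.single i 1

lemma sig_apply (p : Finset (Fin n)) (j : Fin n) :
    sig p j = if j ∈ p then 1 else 0 := by
  simp [sig, Finset.sum_apply, Pi.single_apply, Finset.sum_ite_eq]

lemma sig_inj : Function.Injective (sig (n := n)) := by
  intro p q h
  ext j
  have hj := congrFun h j
  rw [sig_apply, sig_apply] at hj
  by_cases hp : j ∈ p <;> by_cases hq : j ∈ q <;> simp_all

lemma sig_add (p q : Finset (Fin n)) : sig p + sig q = sig (symmDiff p q) := by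
  funext j
  have h2 : (1 + 1 : ZMod 2) = 0 := by decide
  simp only [Pi.add_apply, sig_apply, Finset.mem_symmDiff]
  by_cases hp : j ∈ p <;> by_cases hq : j ∈ q <;> simp [hp, hq, h2]

lemma sig_empty : sig (∅ : Finset (Fin n)) = 0 := by simp [sig]

lemma sig_singleton (i : Fin n) : sig {i} = Pi.single i 1 := by simp [sig]

lemma sig_pair {i j : Fin n} (h : i ≠ j) :
    sig {i, j} = Pi.single i 1 + Pi.single j 1 := by
  rw [sig, Finset.sum_pair h]

lemma card_filter_val (n a b : ℕ) (hb : b < n) :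
    (Finset.univ.filter fun i : Fin n => a ≤ (i : ℕ) ∧ (i : ℕ) ≤ b).card = b + 1 - a := by
  rw [← Nat.card_Icc]
  refine Finset.card_bij (fun i _ => (i : ℕ)) ?_ ?_ ?_
  · intro i hi; simp only [Finset.mem_filter] at hi; simp [Finset.mem_Icc]; omega
  · intro i _ j _ h; exact Fin.val_injective h
  · intro m hm
    simp only [Finset.mem_Icc] at hm
    exact ⟨⟨m, by omega⟩, by simp; omega, rfl⟩

section SD
variable {α : Type*} [DecidableEq α]

lemma sd_empty_left (p : Finset α) : symmDiff ∅ p = p := by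
  ext x; simp [Finset.mem_symmDiff]

lemma sd_empty_right (p : Finset α) : symmDiff p ∅ = p := by
  ext x; simp [Finset.mem_symmDiff]

lemma sd_self (p : Finset α) : symmDiff p p = ∅ := by
  ext x; simp [Finset.mem_symmDiff]

lemma sd_single_single {a b : α} (h : a ≠ b) :
    symmDiff ({a} : Finset α) {b} = {a, b} := by
  ext x
  simp only [Finset.mem_symmDiff, Finset.mem_singleton, Finset.mem_insert]
  by_cases h1 : x = a <;> by_cases h2 : x = b <;> simp_all

lemma sd_single_pair_fst {a c : α} (h : a ≠ c) :
    symmDiff ({a} : Finset α) {a, c} = {c} := by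
  ext x
  simp only [Finset.mem_symmDiff, Finset.mem_singleton, Finset.mem_insert]
  by_cases h1 : x = a <;> by_cases h2 : x = c <;> simp_all

lemma sd_single_pair_snd {a c : α} (h : a ≠ c) :
    symmDiff ({c} : Finset α) {a, c} = {a} := by
  ext x
  simp only [Finset.mem_symmDiff, Finset.mem_singleton, Finset.mem_insert]
  by_cases h1 : x = a <;> by_cases h2 : x = c <;> simp_all

lemma sd_single_pair {a b c : α} (h1 : c ≠ a) (h2 : c ≠ b) :
    symmDiff ({c} : Finset α) {a, b} = {a, b, c} := by
  ext x
  simp only [Finset.mem_symmDiff, Finset.mem_singleton, Finset.mem_insert]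
  by_cases hx1 : x = a <;> by_cases hx2 : x = b <;> by_cases hx3 : x = c <;> simp_all

lemma sd_pair_single {a b c : α} (h1 : c ≠ a) (h2 : c ≠ b) :
    symmDiff ({a, b} : Finset α) {c} = {a, b, c} := by
  rw [symmDiff_comm, sd_single_pair h1 h2]

lemma sd_pair_pair {a b c : α} (h1 : a ≠ b) (h2 : a ≠ c) (h3 : b ≠ c) :
    symmDiff ({a, b} : Finset α) {a, c} = {b, c} := by
  ext x
  simp only [Finset.mem_symmDiff, Finset.mem_singleton, Finset.mem_insert]
  by_cases hx1 : x = a <;> by_cases hx2 : x = b <;> by_cases hx3 : x = c <;> simp_all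

end SD

end Stmt12Aux

open Stmt12Aux

theorem stmt12 (t s : ℕ) (hst : s < t) (A : Finset (Fin (t + 1) → ZMod 2))
    (hA : A = insert 0 ((Finset.univ.image fun i : Fin (t + 1) => Pi.single i (1 : ZMod 2)) ∪
      ((Finset.univ.filter fun i : Fin (t + 1) => 1 ≤ (i : ℕ) ∧ (i : ℕ) ≤ t - s).image
        fun i => (Pi.single (0 : Fin (t + 1)) 1 + Pi.single i 1 : Fin (t + 1) → ZMod 2)))) :
    A.card = 2 * (t + 1) - s ∧
    (A + A).card = 2 * (t * (t - 1) / 2 + t + 1) - s * (s - 1) / 2 ∧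
    affineSpan (ZMod 2) (A : Set (Fin (t + 1) → ZMod 2)) = ⊤ := by
  classical
  set J : Finset (Fin (t+1)) := Finset.univ.filter fun i => 1 ≤ (i:ℕ) ∧ (i:ℕ) ≤ t - s with hJ
  set F : Finset (Finset (Fin (t+1))) :=
    insert ∅ ((Finset.univ.image fun i : Fin (t+1) => ({i} : Finset (Fin (t+1)))) ∪
      J.image fun j => ({0, j} : Finset (Fin (t+1)))) with hF
  have hJprop : ∀ j ∈ J, (0 : Fin (t+1)) ≠ j ∧ (j:ℕ) ≤ t - s := by
    intro j hj
    rw [hJ, Finset.mem_filter] at hj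
    refine ⟨fun h => ?_, hj.2.2⟩
    rw [← h] at hj
    simp at hj
  -- A = F.image sig
  have h1 : (Finset.univ.image fun i : Fin (t+1) => Pi.single i (1:ZMod 2)) =
      Finset.univ.image fun i : Fin (t+1) => sig {i} := by
    simp [sig_singleton]
  have h2 : (J.image fun j => (Pi.single (0 : Fin (t+1)) 1 + Pi.single j 1 : Fin (t+1) → ZMod 2)) =
      J.image fun j => sig {0, j} := by
    apply Finset.image_congr
    intro j hj
    show Pi.single 0 1 + Pi.single j 1 = sig {0, j}
    rw [sig_pair (hJprop j (Finset.mem_coe.1 hj)).1]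
  have hAF : A = F.image sig := by
    rw [hA, hF, Finset.image_insert, Finset.image_union, Finset.image_image,
      Finset.image_image, sig_empty, h1, h2]
    rfl
  -- cardinality facts
  have hJcard : J.card = t - s := by
    rw [hJ, card_filter_val (t+1) 1 (t-s) (by omega)]
    omega
  have hs_card : (Finset.univ.image fun i : Fin (t+1) => ({i} : Finset (Fin (t+1)))).card = t + 1 := by
    rw [Finset.card_image_of_injective _ Finset.singleton_injective, Finset.card_univ,
      Fintype.card_fin]
  have hp_inj : Set.InjOn (fun j : Fin (t+1) => ({0, j} : Finset (Fin (t+1)))) J := by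
    intro j hj k hk h
    dsimp only at h
    have hj0 := (hJprop j (Finset.mem_coe.1 hj)).1
    have : j ∈ ({0, k} : Finset (Fin (t+1))) := by
      rw [← h]; simp
    simp only [Finset.mem_insert, Finset.mem_singleton] at this
    rcases this with h' | h'
    · exact absurd h'.symm hj0
    · exact h'
  have hd1 : Disjoint (Finset.univ.image fun i : Fin (t+1) => ({i} : Finset (Fin (t+1))))
      (J.image fun j => ({0, j} : Finset (Fin (t+1)))) := by
    rw [Finset.disjoint_left]
    rintro p hp hq
    simp only [Finset.mem_image, Finset.mem_univ, true_and] at hp hq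
    obtain ⟨i, rfl⟩ := hp
    obtain ⟨j, hj, hjq⟩ := hq
    have := congrArg Finset.card hjq
    rw [Finset.card_pair (hJprop j hj).1, Finset.card_singleton] at this
    omega
  have hempty1 : (∅ : Finset (Fin (t+1))) ∉
      (Finset.univ.image fun i : Fin (t+1) => ({i} : Finset (Fin (t+1)))) ∪
      (J.image fun j => ({0, j} : Finset (Fin (t+1)))) := by
    simp only [Finset.mem_union, Finset.mem_image, Finset.mem_univ, true_and, not_or, not_exists,
      not_and]
    constructor
    · intro i h; exact (Finset.singleton_ne_empty i) h 
    · intro j hj h; exact (Finset.insert_ne_empty _ _) h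
  have hFcard : F.card = 1 + ((t+1) + (t - s)) := by
    rw [hF, Finset.card_insert_of_notMem hempty1, Finset.card_union_of_disjoint hd1, hs_card,
      Finset.card_image_of_injOn hp_inj, hJcard]
    omega
  have hcard1 : A.card = 2 * (t + 1) - s := by
    rw [hAF, Finset.card_image_of_injective _ sig_inj, hFcard]
    omega
  refine ⟨hcard1, ?_, ?_⟩
  · -- cardinality of A + A
    set Tf : Finset (Fin (t+1)) := Finset.univ.filter (fun i => 1 ≤ (i:ℕ) ∧ (i:ℕ) ≤ t) with hTf
    set Sf : Finset (Fin (t+1)) := Finset.univ.filter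
      (fun i => t - s + 1 ≤ (i:ℕ) ∧ (i:ℕ) ≤ t) with hSf
    set P2 : Finset (Finset (Fin (t+1))) := Finset.powersetCard 2 Finset.univ with hP2
    set P3 : Finset (Finset (Fin (t+1))) :=
      (Finset.powersetCard 2 Tf \ Finset.powersetCard 2 Sf).image (insert 0) with hP3
    set E : Finset (Finset (Fin (t+1))) :=
      insert ∅ (((Finset.univ.image fun i : Fin (t+1) => ({i} : Finset (Fin (t+1)))) ∪ P2) ∪ P3)
      with hE
    have hmemF : ∀ p : Finset (Fin (t+1)), p ∈ F ↔
        p = ∅ ∨ (∃ i, p = {i}) ∨ ∃ j ∈ J, p = {0, j} := by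
      intro p
      simp only [hF, Finset.mem_insert, Finset.mem_union, Finset.mem_image, Finset.mem_univ,
        true_and]
      constructor
      · rintro (h | ⟨i, h⟩ | ⟨j, hj, h⟩)
        · exact Or.inl h
        · exact Or.inr (Or.inl ⟨i, h.symm⟩)
        · exact Or.inr (Or.inr ⟨j, hj, h.symm⟩)
      · rintro (h | ⟨i, h⟩ | ⟨j, hj, h⟩)
        · exact Or.inl h
        · exact Or.inr (Or.inl ⟨i, h.symm⟩)
        · exact Or.inr (Or.inr ⟨j, hj, h.symm⟩)
    have hvalne : ∀ i : Fin (t+1), i ≠ 0 → 1 ≤ (i:ℕ) := by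
      intro i hi
      by_contra h
      push_neg at h
      exact hi (Fin.val_injective (by simp only [Fin.val_zero]; omega))
    have hTmem : ∀ i : Fin (t+1), i ≠ 0 → i ∈ Tf := by
      intro i hi
      rw [hTf, Finset.mem_filter]
      exact ⟨Finset.mem_univ _, hvalne i hi, Nat.lt_succ_iff.mp i.isLt⟩
    have hEempty : (∅ : Finset (Fin (t+1))) ∈ E := Finset.mem_insert_self _ _
    have hEsingle : ∀ i : Fin (t+1), ({i} : Finset (Fin (t+1))) ∈ E := fun i =>
      Finset.mem_insert_of_mem (Finset.mem_union_left _ (Finset.mem_union_left _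
        (Finset.mem_image_of_mem _ (Finset.mem_univ i))))
    have hEpair : ∀ a b : Fin (t+1), a ≠ b → ({a, b} : Finset (Fin (t+1))) ∈ E := by
      intro a b hab
      refine Finset.mem_insert_of_mem (Finset.mem_union_left _ (Finset.mem_union_right _ ?_))
      rw [hP2, Finset.mem_powersetCard]
      exact ⟨Finset.subset_univ _, Finset.card_pair hab⟩
    have hEtriple : ∀ i j : Fin (t+1), i ≠ 0 → j ≠ 0 → i ≠ j →
        ((i:ℕ) ≤ t - s ∨ (j:ℕ) ≤ t - s) → ({0, i, j} : Finset (Fin (t+1))) ∈ E := by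
      intro i j hi hj hij hmin
      refine Finset.mem_insert_of_mem (Finset.mem_union_right _ ?_)
      rw [hP3]
      have hins : ({0, i, j} : Finset (Fin (t+1))) = insert 0 {i, j} := rfl
      rw [hins]
      apply Finset.mem_image_of_mem
      rw [Finset.mem_sdiff, Finset.mem_powersetCard, Finset.mem_powersetCard]
      refine ⟨⟨?_, Finset.card_pair hij⟩, ?_⟩
      · intro x hx
        simp only [Finset.mem_insert, Finset.mem_singleton] at hx
        rcases hx with rfl | rfl
        · exact hTmem x hi
        · exact hTmem x hj
      · rintro ⟨hsub, -⟩
        rcases hmin with h | h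
        · have := hsub (Finset.mem_insert_self i {j})
          rw [hSf, Finset.mem_filter] at this
          omega
        · have := hsub (Finset.mem_insert_of_mem (Finset.mem_singleton_self j))
          rw [hSf, Finset.mem_filter] at this
          omega
    have hFempty : (∅ : Finset (Fin (t+1))) ∈ F := Finset.mem_insert_self _ _
    have hFsingle : ∀ i : Fin (t+1), ({i} : Finset (Fin (t+1))) ∈ F := fun i =>
      (hmemF _).2 (Or.inr (Or.inl ⟨i, rfl⟩))
    have hFpair : ∀ j ∈ J, ({0, j} : Finset (Fin (t+1))) ∈ F := fun j hj =>
      (hmemF _).2 (Or.inr (Or.inr ⟨j, hj, rfl⟩))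
    have haux : A + A = Finset.image₂ (· + ·) A A :=
      Finset.add_def.trans (Finset.image_uncurry_product _ A A)
    have hAA : A + A = (Finset.image₂ symmDiff F F).image sig := by
      rw [haux, hAF, Finset.image₂_image_left, Finset.image₂_image_right,
        Finset.image_image₂]
      exact Finset.image₂_congr fun p _ q _ => sig_add p q
    have hDE : Finset.image₂ symmDiff F F = E := by
      apply Finset.Subset.antisymm
      · intro x hx
        rw [Finset.mem_image₂] at hx
        obtain ⟨p, hp, q, hq, rfl⟩ := hx
        rw [hmemF] at hp hq
        rcases hp with rfl | ⟨i, rfl⟩ | ⟨j, hjJ, rfl⟩ <;>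
          rcases hq with rfl | ⟨k, rfl⟩ | ⟨l, hlJ, rfl⟩
        · rw [sd_self]; exact hEempty
        · rw [sd_empty_left]; exact hEsingle k
        · rw [sd_empty_left]; exact hEpair 0 l (hJprop l hlJ).1
        · rw [sd_empty_right]; exact hEsingle i
        · by_cases hik : i = k
          · subst hik; rw [sd_self]; exact hEempty
          · rw [sd_single_single hik]; exact hEpair i k hik
        · have hl0 : (0 : Fin (t+1)) ≠ l := (hJprop l hlJ).1
          by_cases hi0 : i = 0
          · subst hi0; rw [sd_single_pair_fst hl0]; exact hEsingle l
          · by_cases hil : i = l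
            · subst hil; rw [sd_single_pair_snd hl0]; exact hEsingle 0
            · rw [sd_single_pair hi0 hil]
              exact hEtriple l i (Ne.symm hl0) hi0 (Ne.symm hil) (Or.inl (hJprop l hlJ).2)
        · rw [sd_empty_right]; exact hEpair 0 j (hJprop j hjJ).1
        · have hj0 : (0 : Fin (t+1)) ≠ j := (hJprop j hjJ).1
          rw [symmDiff_comm]
          by_cases hk0 : k = 0
          · subst hk0; rw [sd_single_pair_fst hj0]; exact hEsingle j
          · by_cases hkj : k = j
            · subst hkj; rw [sd_single_pair_snd hj0]; exact hEsingle 0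
            · rw [sd_single_pair hk0 hkj]
              exact hEtriple j k (Ne.symm hj0) hk0 (Ne.symm hkj) (Or.inl (hJprop j hjJ).2)
        · have hj0 : (0 : Fin (t+1)) ≠ j := (hJprop j hjJ).1
          have hl0 : (0 : Fin (t+1)) ≠ l := (hJprop l hlJ).1
          by_cases hjl : j = l
          · subst hjl; rw [sd_self]; exact hEempty
          · rw [sd_pair_pair hj0 hl0 hjl]
            exact hEpair j l hjl
      · intro x hx
        rw [hE, Finset.mem_insert, Finset.mem_union, Finset.mem_union] at hx
        rw [Finset.mem_image₂]
        rcases hx with rfl | ((hx | hx) | hx)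
        · exact ⟨∅, hFempty, ∅, hFempty, sd_self _⟩
        · rw [Finset.mem_image] at hx
          obtain ⟨i, -, rfl⟩ := hx
          exact ⟨∅, hFempty, {i}, hFsingle i, sd_empty_left _⟩
        · rw [hP2, Finset.mem_powersetCard] at hx
          obtain ⟨i, k, hik, rfl⟩ := Finset.card_eq_two.1 hx.2
          exact ⟨{i}, hFsingle i, {k}, hFsingle k, sd_single_single hik⟩
        · rw [hP3, Finset.mem_image] at hx
          obtain ⟨p, hp, rfl⟩ := hx
          rw [Finset.mem_sdiff, Finset.mem_powersetCard, Finset.mem_powersetCard] at hp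
          obtain ⟨⟨hpT, hp2⟩, hnS⟩ := hp
          obtain ⟨i, j, hij, rfl⟩ := Finset.card_eq_two.1 hp2
          have hiT := hpT (Finset.mem_insert_self _ _)
          have hjT := hpT (Finset.mem_insert_of_mem (Finset.mem_singleton_self _))
          rw [hTf, Finset.mem_filter] at hiT hjT
          have hi0 : i ≠ 0 := by
            intro h; rw [h] at hiT; simp only [Fin.val_zero] at hiT; omega
          have hj0 : j ≠ 0 := by
            intro h; rw [h] at hjT; simp only [Fin.val_zero] at hjT; omega
          have hnotsub : ¬ ({i, j} : Finset (Fin (t+1))) ⊆ Sf := fun h => hnS ⟨h, hp2⟩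
          rw [Finset.not_subset] at hnotsub
          obtain ⟨a, haP, haS⟩ := hnotsub
          have haS' : ¬ (t - s + 1 ≤ (a:ℕ) ∧ (a:ℕ) ≤ t) := by
            intro h
            exact haS (by rw [hSf, Finset.mem_filter]; exact ⟨Finset.mem_univ _, h⟩)
          simp only [Finset.mem_insert, Finset.mem_singleton] at haP
          rcases haP with rfl | rfl
          · have hile : (a:ℕ) ≤ t - s := by
              by_contra hc
              exact haS' ⟨by omega, hiT.2.2⟩
            have hiJ : a ∈ J := by
              rw [hJ, Finset.mem_filter]
              exact ⟨Finset.mem_univ _, hiT.2.1, hile⟩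
            refine ⟨{0, a}, hFpair a hiJ, {j}, hFsingle j, ?_⟩
            rw [sd_pair_single hj0 (Ne.symm hij)]
          · have hjle : (a:ℕ) ≤ t - s := by
              by_contra hc
              exact haS' ⟨by omega, hjT.2.2⟩
            have hjJ : a ∈ J := by
              rw [hJ, Finset.mem_filter]
              exact ⟨Finset.mem_univ _, hjT.2.1, hjle⟩
            refine ⟨{0, a}, hFpair a hjJ, {i}, hFsingle i, ?_⟩
            rw [sd_pair_single hi0 hij]
            exact congrArg (insert 0) (Finset.pair_comm a i)
    have hTcard : Tf.card = t := by
      rw [hTf, card_filter_val (t+1) 1 t (by omega)]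
      omega
    have hScard : Sf.card = s := by
      rw [hSf, card_filter_val (t+1) (t-s+1) t (by omega)]
      omega
    have hST : Sf ⊆ Tf := by
      intro x hx
      rw [hSf, Finset.mem_filter] at hx
      rw [hTf, Finset.mem_filter]
      exact ⟨hx.1, by omega, hx.2.2⟩
    have h0Tf : (0 : Fin (t+1)) ∉ Tf := by
      intro h
      rw [hTf, Finset.mem_filter] at h
      simp only [Fin.val_zero] at h
      omega
    have hP3inj : Set.InjOn (insert (0 : Fin (t+1)))
        (↑(Finset.powersetCard 2 Tf \ Finset.powersetCard 2 Sf) : Set (Finset (Fin (t+1)))) := by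
      intro p hp q hq h
      have hp0 : (0 : Fin (t+1)) ∉ p := by
        simp only [Finset.coe_sdiff, Set.mem_diff, Finset.mem_coe, Finset.mem_powersetCard] at hp
        exact fun hc => h0Tf (hp.1.1 hc)
      have hq0 : (0 : Fin (t+1)) ∉ q := by
        simp only [Finset.coe_sdiff, Set.mem_diff, Finset.mem_coe, Finset.mem_powersetCard] at hq
        exact fun hc => h0Tf (hq.1.1 hc)
      rw [← Finset.erase_insert hp0, ← Finset.erase_insert hq0, h]
    have hP3card : P3.card = t.choose 2 - s.choose 2 := by
      rw [hP3, Finset.card_image_of_injOn hP3inj,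
        Finset.card_sdiff_of_subset (Finset.powersetCard_mono hST),
        Finset.card_powersetCard, Finset.card_powersetCard, hTcard, hScard]
    have hP2card : P2.card = (t+1).choose 2 := by
      rw [hP2, Finset.card_powersetCard, Finset.card_univ, Fintype.card_fin]
    have hcard3 : ∀ x ∈ P3, x.card = 3 := by
      intro x hx
      rw [hP3, Finset.mem_image] at hx
      obtain ⟨p, hp, rfl⟩ := hx
      rw [Finset.mem_sdiff, Finset.mem_powersetCard] at hp
      have hp0 : (0 : Fin (t+1)) ∉ p := fun hc => h0Tf (hp.1.1 hc)
      rw [Finset.card_insert_of_notMem hp0, hp.1.2]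
    have hcard1' : ∀ x ∈ (Finset.univ.image fun i : Fin (t+1) => ({i} : Finset (Fin (t+1)))),
        x.card = 1 := by
      intro x hx
      rw [Finset.mem_image] at hx
      obtain ⟨i, -, rfl⟩ := hx
      exact Finset.card_singleton i
    have hcard2'' : ∀ x ∈ P2, x.card = 2 := by
      intro x hx
      rw [hP2, Finset.mem_powersetCard] at hx
      exact hx.2
    have hd12 : Disjoint (Finset.univ.image fun i : Fin (t+1) => ({i} : Finset (Fin (t+1)))) P2 :=
      Finset.disjoint_left.2 fun x h1 h2 => by
        have c1 := hcard1' x h1; have c2 := hcard2'' x h2; omega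
    have hd123 : Disjoint
        ((Finset.univ.image fun i : Fin (t+1) => ({i} : Finset (Fin (t+1)))) ∪ P2) P3 :=
      Finset.disjoint_left.2 fun x h1 h2 => by
        have c3 := hcard3 x h2
        rcases Finset.mem_union.1 h1 with h | h
        · have := hcard1' x h; omega
        · have := hcard2'' x h; omega
    have hemptyE : (∅ : Finset (Fin (t+1))) ∉
        ((Finset.univ.image fun i : Fin (t+1) => ({i} : Finset (Fin (t+1)))) ∪ P2) ∪ P3 := by
      intro h
      rcases Finset.mem_union.1 h with h | h
      · rcases Finset.mem_union.1 h with h | h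
        · have := hcard1' _ h; simp at this
        · have := hcard2'' _ h; simp at this
      · have := hcard3 _ h; simp at this
    have hEcard : E.card = 1 + ((t+1) + (t+1).choose 2 + (t.choose 2 - s.choose 2)) := by
      rw [hE, Finset.card_insert_of_notMem hemptyE, Finset.card_union_of_disjoint hd123,
        Finset.card_union_of_disjoint hd12, hs_card, hP2card, hP3card]
      omega
    have hch : s.choose 2 ≤ t.choose 2 := Nat.choose_le_choose 2 hst.le
    have e3 : (t+1).choose 2 = t + t.choose 2 := by
      rw [Nat.choose_succ_succ, Nat.choose_one_right]
    rw [hAA, Finset.card_image_of_injective _ sig_inj, hDE, hEcard, e3,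
      ← Nat.choose_two_right t, ← Nat.choose_two_right s]
    omega
  · -- affine span
    have h0A : (0 : Fin (t+1) → ZMod 2) ∈ A := by
      rw [hA]; exact Finset.mem_insert_self _ _
    have hsingleA : ∀ i : Fin (t+1), Pi.single i (1 : ZMod 2) ∈ A := by
      intro i
      rw [hA]
      exact Finset.mem_insert_of_mem (Finset.mem_union_left _
        (Finset.mem_image_of_mem _ (Finset.mem_univ i)))
    have hvs : vectorSpan (ZMod 2) (A : Set (Fin (t+1) → ZMod 2)) = ⊤ := by
      rw [eq_top_iff]
      intro v _
      have hv : v = ∑ i : Fin (t+1), v i • Pi.single i (1 : ZMod 2) := by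
        funext j
        rw [Finset.sum_apply]
        simp [Pi.single_apply, mul_ite, Finset.sum_ite_eq]
      rw [hv]
      refine Submodule.sum_mem _ fun i _ => Submodule.smul_mem _ _ ?_
      have := vsub_mem_vectorSpan (ZMod 2) (Finset.mem_coe.2 (hsingleA i)) (Finset.mem_coe.2 h0A)
      simpa using this
    rw [eq_top_iff]
    intro x _
    have hx : x ∈ (affineSpan (ZMod 2) (A : Set (Fin (t+1) → ZMod 2))).direction := by
      rw [direction_affineSpan, hvs]; trivial
    have := AffineSubspace.vadd_mem_of_mem_direction hx
      (mem_affineSpan (ZMod 2) (Finset.mem_coe.2 h0A))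
    simpa using this
end

section
/- Sublinearity of the minimal doubling constant: let K̃(F) be the infimum of |A+A|/|A| over affinely generating subsets A ⊆ Z_2^n (over all n) with 2^n/|A| = F, for F of the form 2^a/b ≥ 1. If F₁ < F₂ are both in the domain, then K̃(F₁)/F₁ ≥ K̃(F₂)/F₂. -/
/-!
If `A ⊆ 𝔽₂ⁿ` affinely generates and has density `1/F₁`, then `A × 𝔽₂ᵏ ⊆ 𝔽₂ⁿ⁺ᵏ` still
generates, has the same density and the same doubling constant. For `F₂ ≥ F₁` of the form
`2^a/b` and `k` large, it contains an affinely generating subset `B` of density exactly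
`1/F₂`; since `|B + B| ≤ |(A + A) × 𝔽₂ᵏ|`, the doubling of `B` is at most `F₂/F₁` times that
of `A`. Starting from `A = 𝔽₂⁰` (so `F₁ = 1`) the same construction shows every admissible
`F` is realized, so the infimum defining `K̃(F₁)` is not over the empty set.
-/

open Finset Pointwise

/-- `K̃(F)`: the infimum of the doubling constant `|A+A|/|A|` over affinely generating
subsets `A ⊆ (ZMod 2)^n` (over all `n`) with `2^n/|A| = F`. -/
noncomputable def Ktilde (F : ℝ) : ℝ :=
  sInf {r : ℝ | ∃ (n : ℕ) (A : Finset (Fin n → ZMod 2)),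
    affineSpan (ZMod 2) (A : Set (Fin n → ZMod 2)) = ⊤ ∧
    (2 ^ n : ℝ) / A.card = F ∧
    r = ((A + A).card : ℝ) / A.card}

theorem exists_subset_card_eq_affineSpan_eq_top {k V : Type*} [DivisionRing k] [AddCommGroup V]
    [Module k V] [FiniteDimensional k V] {A : Finset V}
    (hA : affineSpan k (A : Set V) = ⊤) {m : ℕ} (hm₁ : Module.finrank k V + 1 ≤ m)
    (hm₂ : m ≤ #A) :
    ∃ B ⊆ A, #B = m ∧ affineSpan k (B : Set V) = ⊤ := by
  obtain ⟨t, htA, ht, hind⟩ := exists_affineIndependent k V (A : Set V)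
  obtain ⟨T, rfl⟩ := (A.finite_toSet.subset htA).exists_finset_coe
  have hT : #T ≤ Module.finrank k V + 1 := by
    simpa using hind.card_le_finrank_succ.trans
      (Nat.add_le_add_right (Submodule.finrank_le _) 1)
  obtain ⟨B, hTB, hBA, hB⟩ := exists_subsuperset_card_eq (coe_subset.1 htA) (hT.trans hm₁) hm₂
  refine ⟨B, hBA, hB, top_unique ?_⟩
  rw [← hA, ← ht]
  exact affineSpan_mono k (coe_subset.2 hTB)

theorem exists_lift_card_mul_pow {K : Type*} [Field K] [Fintype K] [DecidableEq K] {n : ℕ}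
    (k : ℕ) {A : Finset (Fin n → K)} (hA : affineSpan K (A : Set (Fin n → K)) = ⊤) :
    ∃ A' : Finset (Fin (n + k) → K), affineSpan K (A' : Set (Fin (n + k) → K)) = ⊤ ∧
      #A' = #A * Fintype.card K ^ k ∧ #(A' + A') = #(A + A) * Fintype.card K ^ k := by
  let e : ((Fin n → K) × (Fin k → K)) ≃ₗ[K] (Fin (n + k) → K) :=
    ((LinearEquiv.funCongrLeft K K finSumFinEquiv).trans
      (LinearEquiv.sumArrowLequivProdArrow (Fin n) (Fin k) K K)).symm
  have hcard : Fintype.card (Fin k → K) = Fintype.card K ^ k := by simp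
  refine ⟨(A ×ˢ univ).image e, ?_, ?_, ?_⟩
  · rw [coe_image, coe_product, coe_univ]
    refine AffineMap.span_eq_top_of_surjective e.toLinearMap.toAffineMap e.surjective ?_
    rw [affineSpan_prod_eq, hA, AffineSubspace.span_univ, AffineSubspace.prod_top_top]
  · rw [card_image_of_injective _ e.injective, card_product, card_univ, hcard]
  · rw [← image_add, card_image_of_injective _ e.injective, product_add_product_comm,
      univ_add_univ, card_product, card_univ, hcard]

theorem exists_lift_subset_card_eq {K : Type*} [Field K] [Fintype K] [DecidableEq K] {n : ℕ}
    {A : Finset (Fin n → K)} (hA : affineSpan K (A : Set (Fin n → K)) = ⊤) (k : ℕ) {m : ℕ}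
    (hm₁ : n + k + 1 ≤ m) (hm₂ : m ≤ #A * Fintype.card K ^ k) :
    ∃ B : Finset (Fin (n + k) → K), affineSpan K (B : Set (Fin (n + k) → K)) = ⊤ ∧
      #B = m ∧ #(B + B) ≤ #(A + A) * Fintype.card K ^ k := by
  obtain ⟨A', hA', hcard, hadd⟩ := exists_lift_card_mul_pow k hA
  obtain ⟨B, hBA', hB, hBspan⟩ := exists_subset_card_eq_affineSpan_eq_top hA'
    (by rwa [Module.finrank_fin_fun]) (hcard ▸ hm₂)
  exact ⟨B, hBspan, hB, hadd ▸ card_le_card (add_subset_add hBA' hBA')⟩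

def doublingRatios (F : ℝ) : Set ℝ :=
  {r : ℝ | ∃ (n : ℕ) (A : Finset (Fin n → ZMod 2)),
    affineSpan (ZMod 2) (A : Set (Fin n → ZMod 2)) = ⊤ ∧
    (2 ^ n : ℝ) / #A = F ∧
    r = (#(A + A) : ℝ) / #A}

theorem Ktilde_eq_sInf_doublingRatios (F : ℝ) : Ktilde F = sInf (doublingRatios F) := rfl

theorem exists_mem_doublingRatios_le {F₁ F₂ r : ℝ} (hr : r ∈ doublingRatios F₁) (hF : F₁ ≤ F₂)
    {a b : ℕ} (hb : 0 < b) (hF₂ : F₂ = 2 ^ a / b) :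
    ∃ e ∈ doublingRatios F₂, e ≤ F₂ / F₁ * r := by
  obtain ⟨n, A, hA, rfl, rfl⟩ := hr
  have hApos : (0 : ℝ) < #A := by
    have := AffineSubspace.nonempty_of_affineSpan_eq_top (ZMod 2) _ _ hA
    exact_mod_cast card_pos.2 (coe_nonempty.1 this)
  -- These give `2 ^ (n + k) / m = F₂`, and `m ≥ 2 * (n + a + 1) ≥ n + k + 1` leaves room
  -- for an affine basis of `𝔽₂^(n + k)`.
  set k := 2 * a + 1
  set m := b * 2 ^ (n + a + 1)
  have hmF₂ : (m : ℝ) * F₂ = 2 ^ (n + k) := by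
    rw [hF₂]
    push_cast [m, k]
    field_simp
    ring
  have hm₁ : n + k + 1 ≤ m := by
    have : n + a < 2 ^ (n + a) := Nat.lt_two_pow_self
    have : 2 ^ (n + a + 1) ≤ m := Nat.le_mul_of_pos_left _ hb
    rw [pow_succ] at this
    omega
  have hm₂ : m ≤ #A * 2 ^ k := by
    have hF₂pos : 0 < F₂ := (div_pos (by positivity) hApos).trans_le hF
    have : (m : ℝ) * F₂ ≤ (#A * 2 ^ k : ℕ) * F₂ := calc
      (m : ℝ) * F₂ = #A * 2 ^ k * (2 ^ n / #A) := by rw [hmF₂]; field_simp; ring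
      _ ≤ (#A * 2 ^ k : ℕ) * F₂ := by push_cast; gcongr
    exact_mod_cast le_of_mul_le_mul_right this hF₂pos
  obtain ⟨B, hB, hBcard, hBB⟩ := exists_lift_subset_card_eq hA k hm₁ (by simpa using hm₂)
  have hmpos : (0 : ℝ) < m := by positivity
  refine ⟨_, ⟨n + k, B, hB, ?_, rfl⟩, ?_⟩
  · rw [hBcard, ← hmF₂]
    field_simp
  · have hF₂m : F₂ = 2 ^ (n + k) / m := by rw [← hmF₂]; field_simp
    have hBB' : (#(B + B) : ℝ) ≤ #(A + A) * 2 ^ k := by exact_mod_cast (by simpa using hBB)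
    calc (#(B + B) : ℝ) / #B ≤ #(A + A) * 2 ^ k / m := by rw [hBcard]; gcongr
      _ = F₂ / (2 ^ n / #A) * (#(A + A) / #A) := by rw [hF₂m]; field_simp; ring

theorem one_mem_doublingRatios_one : (1 : ℝ) ∈ doublingRatios 1 :=
  ⟨0, univ, by simp, by simp, by simp⟩

theorem doublingRatios_nonempty {a b : ℕ} (hb : 0 < b) {F : ℝ} (hF : F = 2 ^ a / b)
    (h₁ : 1 ≤ F) : (doublingRatios F).Nonempty :=
  let ⟨e, he, _⟩ := exists_mem_doublingRatios_le one_mem_doublingRatios_one h₁ hb hF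
  ⟨e, he⟩

theorem doublingRatios_bddBelow (F : ℝ) : BddBelow (doublingRatios F) :=
  ⟨0, fun _ ⟨_, _, _, _, hr⟩ => hr ▸ by positivity⟩

theorem stmt13_general (a₁ b₁ a₂ b₂ : ℕ) (hb₁ : 0 < b₁) (hb₂ : 0 < b₂) (F₁ F₂ : ℝ)
    (hF₁ : F₁ = (2 ^ a₁ : ℝ) / b₁) (hF₂ : F₂ = (2 ^ a₂ : ℝ) / b₂)
    (h₁ : 1 ≤ F₁) (hlt : F₁ < F₂) :
    Ktilde F₂ / F₂ ≤ Ktilde F₁ / F₁ := by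
  have hF₁pos : 0 < F₁ := one_pos.trans_le h₁
  have hF₂pos : 0 < F₂ := hF₁pos.trans hlt
  suffices F₁ / F₂ * Ktilde F₂ ≤ Ktilde F₁ by
    rw [div_mul_eq_mul_div, div_le_iff₀ hF₂pos] at this
    rw [div_le_div_iff₀ hF₂pos hF₁pos]
    linarith
  rw [Ktilde_eq_sInf_doublingRatios, Ktilde_eq_sInf_doublingRatios]
  refine le_csInf (doublingRatios_nonempty hb₁ hF₁ h₁) fun r hr => ?_
  obtain ⟨e, he, hle⟩ := exists_mem_doublingRatios_le hr hlt.le hb₂ hF₂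
  calc F₁ / F₂ * sInf (doublingRatios F₂) ≤ F₁ / F₂ * (F₂ / F₁ * r) := by
        gcongr; exact (csInf_le (doublingRatios_bddBelow F₂) he).trans hle
    _ = r := by field_simp

theorem stmt13 (a₁ b₁ a₂ b₂ : ℕ) (hb₁ : 0 < b₁) (hb₂ : 0 < b₂) (F₁ F₂ : ℝ)
    (hF₁ : F₁ = (2 ^ a₁ : ℝ) / b₁) (hF₂ : F₂ = (2 ^ a₂ : ℝ) / b₂)
    (h₁ : 1 ≤ F₁) (h₂ : 1 ≤ F₂) (hlt : F₁ < F₂) :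
    Ktilde F₂ / F₂ ≤ Ktilde F₁ / F₁ :=
  stmt13_general a₁ b₁ a₂ b₂ hb₁ hb₂ F₁ F₂ hF₁ hF₂ h₁ hlt
end

section
/- Among all quasi-dyadic m-partitions a_1 ≥ ... ≥ a_m of a positive integer a, the sum Σ_{i<j} a_i ∘ a_j = Σ_{i=1}^m (m−i)·a_i is minimized exactly by the unique quasi-fair partition. -/
open Finset

/-- `p` is a non-increasing sequence of `m` positive integers summing to `N`
(an `m`-partition of `N`). -/
def IsMPartition (m N : ℕ) (p : Fin m → ℕ) : Prop :=
  (∀ i, 0 < p i) ∧ (∀ i j : Fin m, i ≤ j → p j ≤ p i) ∧ ∑ i, p i = N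

/-- A quasi-dyadic partition: all parts except possibly the last are powers of `2`. -/
def QuasiDyadic (m : ℕ) (p : Fin m → ℕ) : Prop :=
  ∀ i : Fin m, (i : ℕ) < m - 1 → ∃ k : ℕ, p i = 2 ^ k

/-- A quasi-fair partition: for some `k`, all parts except possibly the last lie in
`{2^k, 2^(k+1)}` (i.e. two consecutive powers of `2`). -/
def QuasiFair (m : ℕ) (p : Fin m → ℕ) : Prop :=
  ∃ k : ℕ, ∀ i : Fin m, (i : ℕ) < m - 1 → p i = 2 ^ k ∨ p i = 2 ^ (k + 1)


/-- prefix sum of the first `t+1` entries -/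
def pre (m : ℕ) (x : Fin m → ℕ) (t : ℕ) : ℕ :=
  ∑ i : Fin m, if (i : ℕ) ≤ t then x i else 0

lemma count_lemma (n iv c : ℕ) :
    ∑ t ∈ range n, (if iv ≤ t then c else 0) = (n - iv) * c := by
  induction n with
  | zero => simp
  | succ n ih =>
    rw [Finset.sum_range_succ, ih]
    by_cases h : iv ≤ n
    · rw [if_pos h, show n + 1 - iv = (n - iv) + 1 by omega]; ring
    · rw [if_neg h, show n - iv = 0 by omega, show n + 1 - iv = 0 by omega]; ring

lemma obj_eq (m : ℕ) (x : Fin m → ℕ) :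
    ∑ i : Fin m, (m - 1 - (i : ℕ)) * x i = ∑ t ∈ range (m - 1), pre m x t := by
  unfold pre
  rw [Finset.sum_comm]
  refine Finset.sum_congr rfl fun i _ => ?_
  have : ∀ t, (if (i : ℕ) ≤ t then x i else 0) = (if (i : ℕ) ≤ t then x i else 0) := fun _ => rfl
  rw [show (∑ t ∈ range (m-1), if (i:ℕ) ≤ t then x i else 0) = (m - 1 - (i:ℕ)) * x i from
    count_lemma (m-1) (i:ℕ) (x i)]

lemma pre_split (m N : ℕ) (x : Fin m → ℕ) (hx : ∑ i, x i = N) (t : ℕ) :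
    pre m x t + (∑ i : Fin m, if t < (i : ℕ) then x i else 0) = N := by
  unfold pre
  rw [← Finset.sum_add_distrib, ← hx]
  refine Finset.sum_congr rfl fun i _ => ?_
  by_cases h : (i : ℕ) ≤ t
  · rw [if_pos h, if_neg (by omega)]; omega
  · rw [if_neg h, if_pos (by omega)]; omega

lemma pre_succ (m : ℕ) (x : Fin m → ℕ) (t : ℕ) (h : t + 1 < m) :
    pre m x (t + 1) = pre m x t + x ⟨t + 1, h⟩ := by
  unfold pre
  have key : ∀ i : Fin m, (if (i : ℕ) ≤ t + 1 then x i else 0)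
      = (if (i : ℕ) ≤ t then x i else 0) + (if i = ⟨t + 1, h⟩ then x i else 0) := by
    intro i
    by_cases h1 : (i : ℕ) ≤ t
    · rw [if_pos (by omega), if_pos h1, if_neg (fun he => by
        rw [he] at h1; simp at h1)]; omega
    · by_cases h2 : (i : ℕ) = t + 1
      · rw [if_pos (by omega), if_neg h1, if_pos (Fin.ext h2)]; omega
      · rw [if_neg (by omega), if_neg h1, if_neg (fun he => h2 (by rw [he]))]
  rw [Finset.sum_congr rfl fun i _ => key i, Finset.sum_add_distrib,
    Finset.sum_ite_eq' univ (⟨t + 1, h⟩ : Fin m) x]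
  simp

lemma pre_zero (m : ℕ) (hm : 0 < m) (x : Fin m → ℕ) : pre m x 0 = x ⟨0, hm⟩ := by
  unfold pre
  have key : ∀ i : Fin m, (if (i : ℕ) ≤ 0 then x i else 0)
      = (if i = ⟨0, hm⟩ then x i else 0) := by
    intro i
    by_cases h1 : (i : ℕ) ≤ 0
    · rw [if_pos h1, if_pos (Fin.ext (by simpa using h1))]
    · rw [if_neg h1, if_neg (fun he => by rw [he] at h1; simp at h1)]
  rw [Finset.sum_congr rfl fun i _ => key i, Finset.sum_ite_eq' univ (⟨0, hm⟩ : Fin m) x]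
  simp

lemma pre_top (m N : ℕ) (x : Fin m → ℕ) (hx : ∑ i, x i = N) (t : ℕ) (ht : m - 1 ≤ t) :
    pre m x t = N := by
  unfold pre
  rw [← hx]
  exact Finset.sum_congr rfl fun i _ => if_pos (by have := i.isLt; omega)

lemma tail_last (m : ℕ) (h2 : 2 ≤ m) (hl : m - 1 < m) (x : Fin m → ℕ) :
    (∑ i : Fin m, if m - 2 < (i : ℕ) then x i else 0) = x ⟨m - 1, hl⟩ := by
  have key : ∀ i : Fin m, (if m - 2 < (i : ℕ) then x i else 0)
      = (if i = ⟨m - 1, hl⟩ then x i else 0) := by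
    intro i
    by_cases h1 : m - 2 < (i : ℕ)
    · rw [if_pos h1, if_pos (Fin.ext (by have := i.isLt; simp; omega))]
    · rw [if_neg h1, if_neg (fun he => by rw [he] at h1; simp at h1; omega)]
  rw [Finset.sum_congr rfl fun i _ => key i, Finset.sum_ite_eq' univ _ x]
  simp

lemma mod_compare {j K A B pl ql N : ℕ} (hjK : j ≤ K) (hA : 2 ^ j ∣ A) (hB : 2 ^ K ∣ B)
    (h1 : A + pl = N) (h2 : B + ql = N) (hpl : 1 ≤ pl) (hpl2 : pl ≤ 2 ^ j)
    (hql : 1 ≤ ql) (hql2 : ql ≤ 2 ^ K) : pl ≤ ql := by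
  obtain ⟨a, ha⟩ := hA
  obtain ⟨b, hb⟩ := hB
  have e1 : (N - 1) % 2 ^ j = pl - 1 := by
    rw [show N - 1 = 2 ^ j * a + (pl - 1) by omega, Nat.mul_add_mod,
      Nat.mod_eq_of_lt (by omega)]
  have e2 : (N - 1) % 2 ^ K = ql - 1 := by
    rw [show N - 1 = 2 ^ K * b + (ql - 1) by omega, Nat.mul_add_mod,
      Nat.mod_eq_of_lt (by omega)]
  have e3 : (N - 1) % 2 ^ j ≤ (N - 1) % 2 ^ K := by
    calc (N - 1) % 2 ^ j = (N - 1) % 2 ^ K % 2 ^ j :=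
          (Nat.mod_mod_of_dvd _ (pow_dvd_pow 2 hjK)).symm
      _ ≤ (N - 1) % 2 ^ K := Nat.mod_le _ _
  omega

theorem stmt15 (m N : ℕ) (hm : 0 < m) (p q : Fin m → ℕ)
    (hp : IsMPartition m N p) (hpd : QuasiDyadic m p)
    (hq : IsMPartition m N q) (hqd : QuasiDyadic m q) (hqf : QuasiFair m q) :
    (∑ i : Fin m, (m - 1 - (i : ℕ)) * q i) ≤ (∑ i : Fin m, (m - 1 - (i : ℕ)) * p i) ∧
    ((∑ i : Fin m, (m - 1 - (i : ℕ)) * q i) = (∑ i : Fin m, (m - 1 - (i : ℕ)) * p i) → p = q) := by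
  obtain ⟨hppos, hpmono, hpsum⟩ := hp
  obtain ⟨hqpos, hqmono, hqsum⟩ := hq
  rcases Nat.lt_or_ge m 2 with hm1 | hm2
  · -- m = 1
    have hm1' : m = 1 := by omega
    subst hm1'
    have hpq : p = q := by
      funext i
      have h0 : i = ⟨0, hm⟩ := Fin.ext (show (i : ℕ) = 0 by have := i.isLt; omega)
      rw [Fin.sum_univ_one] at hpsum hqsum
      rw [h0, show (⟨0, hm⟩ : Fin 1) = 0 from rfl]
      omega
    exact ⟨le_of_eq (by rw [hpq]), fun _ => hpq⟩
  · -- m ≥ 2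
    have hlt1 : m - 1 < m := by omega
    have hlt2 : m - 2 < m := by omega
    obtain ⟨k0, hk0⟩ := hqf
    -- normalize the exponent so that the last part is at most 2 ^ K
    obtain ⟨K, hKhead, hKlast⟩ :
        ∃ K, (∀ i : Fin m, (i : ℕ) < m - 1 → q i = 2 ^ K ∨ q i = 2 ^ (K + 1)) ∧
          q ⟨m - 1, hlt1⟩ ≤ 2 ^ K := by
      by_cases hc : q ⟨m - 1, hlt1⟩ ≤ 2 ^ k0
      · exact ⟨k0, hk0, hc⟩
      · have hsl : q ⟨m - 1, hlt1⟩ ≤ q ⟨m - 2, hlt2⟩ :=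
          hqmono _ _ (Fin.le_def.mpr (show m - 2 ≤ m - 1 by omega))
        have hsnd : q ⟨m - 2, hlt2⟩ = 2 ^ (k0 + 1) := by
          rcases hk0 ⟨m - 2, hlt2⟩ (show m - 2 < m - 1 by omega) with h | h
          · omega
          · exact h
        refine ⟨k0 + 1, fun i hi => Or.inl ?_, by omega⟩
        have hile : q ⟨m - 2, hlt2⟩ ≤ q i :=
          hqmono i _ (Fin.le_def.mpr (show (i : ℕ) ≤ m - 2 by omega))
        rcases hk0 i hi with h | h
        · have hpos : 0 < 2 ^ k0 := pow_pos (by norm_num) k0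
          have hss : (2 : ℕ) ^ (k0 + 1) = 2 * 2 ^ k0 := by ring
          omega
        · exact h
    -- head sums are divisible
    have hqdvd : 2 ^ K ∣ pre m q (m - 2) := by
      unfold pre
      apply Finset.dvd_sum
      intro i _
      by_cases h : (i : ℕ) ≤ m - 2
      · rw [if_pos h]
        rcases hKhead i (by omega) with he | he <;> rw [he] <;>
          exact pow_dvd_pow 2 (by omega)
      · rw [if_neg h]; exact dvd_zero _
    have hNq : pre m q (m - 2) + q ⟨m - 1, hlt1⟩ = N := by
      have h := pre_split m N q hqsum (m - 2)
      rwa [tail_last m hm2 hlt1 q] at h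
    have hNp : pre m p (m - 2) + p ⟨m - 1, hlt1⟩ = N := by
      have h := pre_split m N p hpsum (m - 2)
      rwa [tail_last m hm2 hlt1 p] at h
    -- key lemma: if the second-to-last part of p is small, last part of p ≤ last of q
    have L1 : p ⟨m - 2, hlt2⟩ ≤ 2 ^ K → p ⟨m - 1, hlt1⟩ ≤ q ⟨m - 1, hlt1⟩ := by
      intro hle
      obtain ⟨j, hj⟩ := hpd ⟨m - 2, hlt2⟩ (show m - 2 < m - 1 by omega)
      have hjK : j ≤ K := by
        have h2 : (2 : ℕ) ^ j ≤ 2 ^ K := by rw [← hj]; exact hle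
        exact (Nat.pow_le_pow_iff_right (by norm_num)).mp h2
      have hpdvd : 2 ^ j ∣ pre m p (m - 2) := by
        unfold pre
        apply Finset.dvd_sum
        intro i _
        by_cases h : (i : ℕ) ≤ m - 2
        · rw [if_pos h]
          obtain ⟨ji, hji⟩ := hpd i (by omega)
          have hmo : p ⟨m - 2, hlt2⟩ ≤ p i :=
            hpmono i _ (Fin.le_def.mpr (show (i : ℕ) ≤ m - 2 by omega))
          rw [hj, hji] at hmo
          rw [hji]
          exact pow_dvd_pow 2 ((Nat.pow_le_pow_iff_right (by norm_num)).mp hmo)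
        · rw [if_neg h]; exact dvd_zero _
      have hplast : p ⟨m - 1, hlt1⟩ ≤ 2 ^ j := by
        rw [← hj]
        exact hpmono _ _ (Fin.le_def.mpr (show m - 2 ≤ m - 1 by omega))
      exact mod_compare hjK hpdvd hqdvd hNp hNq (hppos _) hplast (hqpos _) hKlast
    -- prefix sums of q are at most those of p
    have hpre : ∀ t ∈ range (m - 1), pre m q t ≤ pre m p t := by
      intro t ht
      rw [Finset.mem_range] at ht
      have htm : t < m := by omega
      obtain ⟨jt, hjt⟩ := hpd ⟨t, htm⟩ (show t < m - 1 from ht)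
      by_cases hcase : p ⟨t, htm⟩ ≤ 2 ^ K
      · -- compare tails
        have hlast : p ⟨m - 1, hlt1⟩ ≤ q ⟨m - 1, hlt1⟩ :=
          L1 (le_trans (hpmono _ _ (Fin.le_def.mpr (show t ≤ m - 2 by omega))) hcase)
        have htail : (∑ i : Fin m, if t < (i : ℕ) then p i else 0)
            ≤ (∑ i : Fin m, if t < (i : ℕ) then q i else 0) := by
          apply Finset.sum_le_sum
          intro i _
          by_cases h1 : t < (i : ℕ)
          · rw [if_pos h1, if_pos h1]
            by_cases h2 : (i : ℕ) < m - 1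
            · have hpi : p i ≤ 2 ^ K :=
                le_trans (hpmono _ i (Fin.le_def.mpr (show t ≤ (i : ℕ) by omega))) hcase
              have hqi : 2 ^ K ≤ q i := by
                rcases hKhead i h2 with h | h <;> rw [h] <;>
                  exact Nat.pow_le_pow_right (by norm_num) (by omega)
              omega
            · have hieq : i = ⟨m - 1, hlt1⟩ :=
                Fin.ext (show (i : ℕ) = m - 1 by have := i.isLt; omega)
              rw [hieq]; exact hlast
          · rw [if_neg h1, if_neg h1]
        have h1 := pre_split m N p hpsum t
        have h2 := pre_split m N q hqsum t
        omega
      · -- p's head is large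
        have hpt : 2 ^ (K + 1) ≤ p ⟨t, htm⟩ := by
          rw [hjt] at hcase ⊢
          have hKjt : K < jt := by
            by_contra hno
            exact hcase (Nat.pow_le_pow_right (by norm_num) (by omega))
          exact Nat.pow_le_pow_right (by norm_num) hKjt
        unfold pre
        apply Finset.sum_le_sum
        intro i _
        by_cases h1 : (i : ℕ) ≤ t
        · rw [if_pos h1, if_pos h1]
          have hqi : q i ≤ 2 ^ (K + 1) := by
            rcases hKhead i (by omega) with h | h <;> rw [h] <;>
              exact Nat.pow_le_pow_right (by norm_num) (by omega)
          have hpi : p ⟨t, htm⟩ ≤ p i :=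
            hpmono i _ (Fin.le_def.mpr (show (i : ℕ) ≤ t from h1))
          omega
        · rw [if_neg h1, if_neg h1]
    constructor
    · rw [obj_eq m q, obj_eq m p]
      exact Finset.sum_le_sum hpre
    · intro heq
      rw [obj_eq m q, obj_eq m p] at heq
      have hall : ∀ t ∈ range (m - 1), pre m q t = pre m p t :=
        (Finset.sum_eq_sum_iff_of_le hpre).mp heq
      have hall' : ∀ t, t < m → pre m q t = pre m p t := by
        intro t ht
        by_cases h : t < m - 1
        · exact hall t (Finset.mem_range.mpr h)
        · rw [pre_top m N q hqsum t (by omega), pre_top m N p hpsum t (by omega)]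
      funext i
      rcases Nat.eq_zero_or_pos (i : ℕ) with h0 | h0
      · have hieq : i = ⟨0, hm⟩ := Fin.ext (show (i : ℕ) = 0 from h0)
        rw [hieq, ← pre_zero m hm p, ← pre_zero m hm q]
        exact (hall' 0 hm).symm
      · obtain ⟨t, htt⟩ : ∃ t, (i : ℕ) = t + 1 := ⟨(i : ℕ) - 1, by omega⟩
        have hlt : t + 1 < m := by rw [← htt]; exact i.isLt
        have hieq : i = ⟨t + 1, hlt⟩ := Fin.ext (show (i : ℕ) = t + 1 from htt)
        have e1 := pre_succ m p t hlt
        have e2 := pre_succ m q t hlt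
        have e3 := hall' (t + 1) hlt
        have e4 := hall' t (by omega)
        rw [hieq]
        omega
end

section
/- Averaged isoperimetric inequality for families of downsets: let C_1, ..., C_l ⊆ 2^{[n]} be downsets satisfying the antichain condition, i.e., ∂C_i ⊆ C_j for all i, j. If the average cardinality E[C] = (1/l)Σ_m |C_m| equals C(n,0)+C(n,1)+...+C(n,k−1)+p·C(n,k) for some integer k ≥ 0 and real 0 ≤ p < 1, then the average upper-shadow size E[δC] = (1/l)Σ_m |δC_m| is at least C(n,1)+C(n,2)+...+C(n,k)+p·C(n,k+1). -/
/-!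
Let `isoProfile n` be the concave piecewise-linear function through the points
`(∑_{i<k} C(n,i), ∑_{i<k} C(n,i+1))`; the claim is `isoProfile n (𝔼|C|) ≤ 𝔼|∂⁺C|`, proved by
induction on `n`. Splitting each `C_m` along the last coordinate into the sections `B_m ⊇ T_m` on
`Fin n` gives `|C_m| = |B_m| + |T_m|` and `|∂⁺C_m| = |∂⁺B_m| + |B_m ∪ ∂⁺T_m|`, and both families
of sections inherit the antichain condition. As `∅ ∈ B_m` but `∅ ∉ ∂⁺T_m`, the last term has
average at least `max (𝔼|B|) (𝔼|∂⁺T| + 1)`, and the induction closes with the estimate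
`isoProfile (n+1) (x+y) ≤ isoProfile n x + max x (isoProfile n y + 1)` for `0 ≤ y ≤ x ≤ 2^n`,
which follows from Pascal's rule and concavity. If some `C_m` is empty, the antichain condition
forces every `C_j ⊆ {∅}`, and then `|∂⁺C_j| = n |C_j|`.
-/

open Finset
open scoped FinsetFamily BigOperators

noncomputable def binomSum (n k : ℕ) : ℝ := ∑ i ∈ range k, (n.choose i : ℝ)

noncomputable def binomRatio (n k : ℕ) : ℝ := ((n - k : ℕ) : ℝ) / (k + 1)

/-- The line through the `k`-th and `(k+1)`-st breakpoints of `isoProfile n`; its slope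
`binomRatio n k` is `C(n,k+1) / C(n,k)`. -/
noncomputable def profileLine (n k : ℕ) (s : ℝ) : ℝ :=
  binomSum n (k + 1) - 1 + (s - binomSum n k) * binomRatio n k

/-- A concave piecewise-linear function is the minimum of the lines extending its pieces. -/
noncomputable def isoProfile (n : ℕ) (s : ℝ) : ℝ :=
  (range (n + 1)).inf' nonempty_range_add_one (profileLine n · s)

lemma binomSum_zero (n : ℕ) : binomSum n 0 = 0 := by simp [binomSum]

lemma binomSum_succ (n k : ℕ) : binomSum n (k + 1) = binomSum n k + n.choose k := by
  simp [binomSum, sum_range_succ]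

lemma binomSum_one (n : ℕ) : binomSum n 1 = 1 := by simp [binomSum]

lemma binomSum_of_lt {n k : ℕ} (h : n < k) : binomSum n k = 2 ^ n := by
  induction k, h using Nat.le_induction with
  | base => simp [binomSum, ← Nat.cast_sum, Nat.sum_range_choose]
  | succ k hk ih => rw [binomSum_succ, ih, Nat.choose_eq_zero_of_lt hk, Nat.cast_zero, add_zero]

lemma binomSum_succ_succ (n k : ℕ) :
    binomSum (n + 1) (k + 1) = binomSum n (k + 1) + binomSum n k := by
  induction k with
  | zero => simp [binomSum_one, binomSum_zero]
  | succ k ih =>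
    rw [binomSum_succ (n + 1), ih, binomSum_succ n (k + 1), binomSum_succ n k,
      Nat.choose_succ_succ, Nat.cast_add]
    ring

lemma sum_range_choose_succ (n k : ℕ) :
    ∑ i ∈ range k, (n.choose (i + 1) : ℝ) = binomSum n (k + 1) - 1 := by
  rw [binomSum, sum_range_succ']
  simp

lemma binomRatio_nonneg (n k : ℕ) : 0 ≤ binomRatio n k := by
  unfold binomRatio; positivity

lemma choose_succ_eq_mul_binomRatio (n k : ℕ) :
    (n.choose (k + 1) : ℝ) = n.choose k * binomRatio n k := by
  have h : ((n.choose (k + 1) * (k + 1) : ℕ) : ℝ) = (n.choose k * (n - k) : ℕ) :=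
    congrArg _ (Nat.choose_succ_right_eq n k)
  push_cast at h
  rw [binomRatio, mul_div_assoc', eq_div_iff (by positivity), h]

lemma binomRatio_antitone (n : ℕ) : Antitone (binomRatio n) := by
  intro j k hjk
  unfold binomRatio
  gcongr

lemma profileLine_affine (n k : ℕ) (u v a b : ℝ) (hab : a + b = 1) :
    profileLine n k (a * u + b * v) = a * profileLine n k u + b * profileLine n k v := by
  unfold profileLine
  linear_combination (binomSum n k * binomRatio n k - binomSum n (k + 1) + 1) * hab

lemma isoProfile_le_profileLine (n : ℕ) {k : ℕ} (hk : k ≤ n) (s : ℝ) :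
    isoProfile n s ≤ profileLine n k s :=
  inf'_le _ (mem_range_succ_iff.mpr hk)

lemma concaveOn_isoProfile (n : ℕ) : ConcaveOn ℝ Set.univ (isoProfile n) := by
  refine ⟨convex_univ, fun u _ v _ a b ha hb hab => le_inf' _ _ fun k hk => ?_⟩
  have hk : k ≤ n := mem_range_succ_iff.mp hk
  simp only [smul_eq_mul]
  rw [profileLine_affine n k u v a b hab]
  gcongr <;> exact isoProfile_le_profileLine n hk _

lemma monotone_isoProfile (n : ℕ) : Monotone (isoProfile n) := by
  intro s t hst
  refine le_inf' _ _ fun k hk => (isoProfile_le_profileLine n (mem_range_succ_iff.mp hk) s).trans ?_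
  unfold profileLine
  gcongr
  exact binomRatio_nonneg n k

lemma isoProfile_le_mul (n : ℕ) (s : ℝ) : isoProfile n s ≤ n * s := by
  convert isoProfile_le_profileLine n (Nat.zero_le n) s using 1
  simp [profileLine, binomRatio, binomSum_one, binomSum_zero, mul_comm]

/-- The gap changes by `C(n,k) * (binomRatio n j - binomRatio n k)` from `k` to `k + 1`, so as
`binomRatio n` is antitone it grows away from `k = j`, where it vanishes. -/
lemma binomSum_succ_sub_one_le_profileLine (n j k : ℕ) :
    binomSum n (k + 1) - 1 ≤ profileLine n j (binomSum n k) := by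
  set gap : ℕ → ℝ := fun k => profileLine n j (binomSum n k) - (binomSum n (k + 1) - 1)
  have hstep : ∀ k, gap (k + 1) = gap k + n.choose k * (binomRatio n j - binomRatio n k) := by
    intro k
    simp only [gap, profileLine, binomSum_succ n (k + 1), binomSum_succ n k,
      choose_succ_eq_mul_binomRatio n k]
    ring
  have hj : gap j = 0 := by simp [gap, profileLine]
  suffices 0 ≤ gap k by simpa [gap] using this
  rcases le_total j k with hjk | hkj
  · induction k, hjk using Nat.le_induction with
    | base => exact hj.ge
    | succ k hjk ih =>
      rw [hstep]
      have := binomRatio_antitone n hjk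
      have : (0 : ℝ) ≤ n.choose k := Nat.cast_nonneg _
      nlinarith
  · refine Nat.decreasingInduction (motive := fun k _ => 0 ≤ gap k) (fun k hkj ih => ?_) hj.ge hkj
    rw [hstep] at ih
    have := binomRatio_antitone n hkj.le
    have : (0 : ℝ) ≤ n.choose k := Nat.cast_nonneg _
    nlinarith

lemma isoProfile_binomSum_add (n k : ℕ) {p : ℝ} (hp0 : 0 ≤ p) (hp1 : p ≤ 1) :
    isoProfile n (binomSum n k + p * n.choose k)
      = binomSum n (k + 1) - 1 + p * n.choose (k + 1) := by
  refine le_antisymm ?_ (le_inf' _ _ fun j _ => ?_)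
  · rcases le_or_gt k n with hkn | hnk
    · refine (isoProfile_le_profileLine n hkn _).trans_eq ?_
      rw [profileLine, choose_succ_eq_mul_binomRatio]
      ring
    · refine (isoProfile_le_profileLine n le_rfl _).trans_eq ?_
      simp [profileLine, binomRatio, Nat.choose_eq_zero_of_lt hnk,
        Nat.choose_eq_zero_of_lt (hnk.trans (Nat.lt_succ_self k)), binomSum_of_lt hnk,
        binomSum_of_lt (hnk.trans (Nat.lt_succ_self k)), binomSum_of_lt (Nat.lt_succ_self n)]
  · have hmid : binomSum n k + p * n.choose k
        = p * binomSum n (k + 1) + (1 - p) * binomSum n k := by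
      rw [binomSum_succ]; ring
    have hval : binomSum n (k + 1) - 1 + p * n.choose (k + 1)
        = p * (binomSum n (k + 2) - 1) + (1 - p) * (binomSum n (k + 1) - 1) := by
      rw [binomSum_succ n (k + 1)]; ring
    rw [hmid, hval, profileLine_affine n j _ _ _ _ (by ring)]
    have h1 := binomSum_succ_sub_one_le_profileLine n j (k + 1)
    have h2 := binomSum_succ_sub_one_le_profileLine n j k
    have : 0 ≤ 1 - p := by linarith
    gcongr

lemma ConcaveOn.add_le_add_map_add_sub {f : ℝ → ℝ} (hf : ConcaveOn ℝ Set.univ f) {a b c : ℝ}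
    (hab : a ≤ b) (hbc : b ≤ c) : f a + f c ≤ f b + f (a + c - b) := by
  rcases hab.eq_or_lt with rfl | hab
  · simp
  set θ := (b - a) / (c - a)
  have hθ : θ * (c - a) = b - a := div_mul_cancel₀ _ (by linarith)
  have hθ0 : 0 ≤ θ := div_nonneg (by linarith) (by linarith)
  have hθ1 : 0 ≤ 1 - θ := by
    rw [sub_nonneg, div_le_one (by linarith)]; linarith
  have hb := hf.2 (Set.mem_univ c) (Set.mem_univ a) hθ0 hθ1 (by ring)
  have hd := hf.2 (Set.mem_univ a) (Set.mem_univ c) hθ0 hθ1 (by ring)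
  simp only [smul_eq_mul] at hb hd
  rw [show θ * c + (1 - θ) * a = b by linear_combination hθ] at hb
  rw [show θ * a + (1 - θ) * c = a + c - b by linear_combination -hθ] at hd
  linarith

lemma exists_eq_binomSum_add (n : ℕ) {x : ℝ} (hx0 : 0 ≤ x) (hx1 : x ≤ 2 ^ n) :
    ∃ k p, 0 ≤ p ∧ p ≤ 1 ∧ x = binomSum n k + p * n.choose k := by
  classical
  set k := Nat.findGreatest (fun j => binomSum n j ≤ x) n
  have hkn : k ≤ n := Nat.findGreatest_le n
  have hk : binomSum n k ≤ x :=
    Nat.findGreatest_spec (P := fun j => binomSum n j ≤ x) (Nat.zero_le n)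
      (by simpa [binomSum_zero])
  have hk1 : x ≤ binomSum n (k + 1) := by
    rcases hkn.lt_or_eq with hkn | hkn
    · exact le_of_not_ge (Nat.findGreatest_is_greatest (Nat.lt_succ_self k) hkn)
    · rwa [hkn, binomSum_of_lt (Nat.lt_succ_self n)]
  have hc : (0 : ℝ) < n.choose k := by exact_mod_cast Nat.choose_pos hkn
  rw [binomSum_succ] at hk1
  refine ⟨k, (x - binomSum n k) / n.choose k, by bound, ?_, by field_simp; ring⟩
  rw [div_le_one hc]
  linarith

/-- If `x < s`, then `t < y ≤ x < s` and concavity moves the pair `(t, s)` inwards to `(y, x)`. -/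
lemma isoProfile_add_self_le {n : ℕ} {x y s t : ℝ} (hyx : y ≤ x) (hst : s + t = x + y)
    (hs : s ≤ isoProfile n t + 1) :
    isoProfile n s + s ≤ isoProfile n x + max x (isoProfile n y + 1) := by
  rcases le_total s x with hsx | hxs
  · exact add_le_add (monotone_isoProfile n hsx) (hsx.trans (le_max_left _ _))
  · have hpair := (concaveOn_isoProfile n).add_le_add_map_add_sub (a := t) (b := y) (c := s)
      (by linarith) (hyx.trans hxs)
    rw [show t + s - y = x by linarith] at hpair
    linarith [le_max_right x (isoProfile n y + 1)]

/-- Pascal's rule splits `x + y` as `s + t` with `s ≤ isoProfile n t + 1` and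
`isoProfile (n + 1) (s + t) = isoProfile n s + s`. -/
lemma isoProfile_succ_add_le {n : ℕ} {x y : ℝ} (hy : 0 ≤ y) (hyx : y ≤ x) (hx : x ≤ 2 ^ n) :
    isoProfile (n + 1) (x + y) ≤ isoProfile n x + max x (isoProfile n y + 1) := by
  obtain ⟨k, p, hp0, hp1, hxy⟩ :=
    exists_eq_binomSum_add (n + 1) (x := x + y) (by linarith) (by rw [pow_succ]; linarith)
  obtain ⟨s, t, hst, hs, hval⟩ : ∃ s t, s + t = x + y ∧ s ≤ isoProfile n t + 1 ∧
      isoProfile (n + 1) (x + y) = isoProfile n s + s := by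
    rw [hxy, isoProfile_binomSum_add (n + 1) k hp0 hp1]
    rcases k with _ | k
    · have hs := isoProfile_binomSum_add n 0 hp0 hp1
      have ht := isoProfile_binomSum_add n 0 le_rfl zero_le_one
      simp only [binomSum_zero, binomSum_one, Nat.choose_zero_right, Nat.choose_one_right,
        Nat.cast_one, mul_one, zero_mul, zero_add, sub_self] at hs ht ⊢
      refine ⟨p, 0, by simp, by simp [ht, hp1], ?_⟩
      rw [hs]; push_cast; ring
    · have hs := isoProfile_binomSum_add n (k + 1) hp0 hp1
      have ht := isoProfile_binomSum_add n k hp0 hp1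
      refine ⟨binomSum n (k + 1) + p * n.choose (k + 1), binomSum n k + p * n.choose k,
        ?_, by rw [ht]; linarith, ?_⟩
      · rw [binomSum_succ_succ, Nat.choose_succ_succ, Nat.cast_add]
        ring
      · rw [hs, binomSum_succ_succ n (k + 1), Nat.choose_succ_succ, Nat.cast_add]
        ring
  rw [hval]
  exact isoProfile_add_self_le hyx hst hs

namespace Finset

variable {n : ℕ}

def nonMemberSection (C : Finset (Finset (Fin (n + 1)))) : Finset (Finset (Fin n)) :=
  univ.filter fun S => S.map Fin.castSuccEmb ∈ C

def memberSection (C : Finset (Finset (Fin (n + 1)))) : Finset (Finset (Fin n)) :=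
  univ.filter fun S => insert (Fin.last n) (S.map Fin.castSuccEmb) ∈ C

variable {C D : Finset (Finset (Fin (n + 1)))} {S : Finset (Fin n)}

@[simp] lemma mem_nonMemberSection : S ∈ C.nonMemberSection ↔ S.map Fin.castSuccEmb ∈ C := by
  simp [nonMemberSection]

@[simp] lemma mem_memberSection :
    S ∈ C.memberSection ↔ insert (Fin.last n) (S.map Fin.castSuccEmb) ∈ C := by
  simp [memberSection]

lemma last_notMem_map_castSuccEmb (S : Finset (Fin n)) : Fin.last n ∉ S.map Fin.castSuccEmb := by
  simp [Fin.castSucc_ne_last]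

lemma erase_castSucc_map_castSuccEmb (S : Finset (Fin n)) (a : Fin n) :
    (S.map Fin.castSuccEmb).erase a.castSucc = (S.erase a).map Fin.castSuccEmb :=
  (map_erase Fin.castSuccEmb S a).symm

lemma map_castSuccEmb_filter_castSucc_mem (U : Finset (Fin (n + 1))) :
    (univ.filter (Fin.castSucc · ∈ U)).map Fin.castSuccEmb = U.erase (Fin.last n) := by
  ext b
  induction b using Fin.lastCases <;> simp [Fin.castSucc_ne_last]

lemma exists_map_castSuccEmb_eq {U : Finset (Fin (n + 1))} (h : Fin.last n ∉ U) :
    ∃ S : Finset (Fin n), S.map Fin.castSuccEmb = U :=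
  ⟨_, (map_castSuccEmb_filter_castSucc_mem U).trans (erase_eq_of_notMem h)⟩

lemma exists_insert_last_map_castSuccEmb_eq {U : Finset (Fin (n + 1))} (h : Fin.last n ∈ U) :
    ∃ S : Finset (Fin n), insert (Fin.last n) (S.map Fin.castSuccEmb) = U :=
  ⟨_, by rw [map_castSuccEmb_filter_castSucc_mem, insert_erase h]⟩

lemma insert_last_map_castSuccEmb_injective :
    Function.Injective fun S : Finset (Fin n) => insert (Fin.last n) (S.map Fin.castSuccEmb) := by
  intro S S' h
  ext a
  simpa [Fin.castSucc_ne_last] using congrArg (Fin.castSucc a ∈ ·) h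

lemma card_eq_card_nonMemberSection_add_card_memberSection :
    #C = #C.nonMemberSection + #C.memberSection := by
  rw [← card_filter_add_card_filter_not (fun U => Fin.last n ∉ U) (s := C)]
  congr 1
  · refine (card_nbij (·.map Fin.castSuccEmb) (fun S hS => ?_) (map_injective _).injOn
      fun U hU => ?_).symm
    · simpa [last_notMem_map_castSuccEmb] using hS
    · obtain ⟨S, rfl⟩ := exists_map_castSuccEmb_eq (mem_filter.1 hU).2
      exact ⟨S, by simpa using (mem_filter.1 hU).1, rfl⟩
  · refine (card_nbij _ (fun S hS => ?_) insert_last_map_castSuccEmb_injective.injOn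
      fun U hU => ?_).symm
    · simpa using hS
    · obtain ⟨S, rfl⟩ := exists_insert_last_map_castSuccEmb_eq (not_not.1 (mem_filter.1 hU).2)
      exact ⟨S, by simpa using (mem_filter.1 hU).1, rfl⟩

lemma nonMemberSection_upShadow : (∂⁺ C).nonMemberSection = ∂⁺ C.nonMemberSection := by
  ext S
  simp [mem_upShadow_iff_erase_mem, erase_castSucc_map_castSuccEmb, -map_erase]

lemma memberSection_upShadow :
    (∂⁺ C).memberSection = C.nonMemberSection ∪ ∂⁺ C.memberSection := by
  ext S
  simp [mem_upShadow_iff_erase_mem, erase_insert_of_ne (Fin.castSucc_ne_last _).symm,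
    erase_castSucc_map_castSuccEmb, -map_erase]

lemma shadow_nonMemberSection_subset : ∂ C.nonMemberSection ⊆ (∂ C).nonMemberSection := by
  intro S hS
  obtain ⟨a, ha, haS⟩ := mem_shadow_iff_insert_mem.1 hS
  rw [mem_nonMemberSection, mem_shadow_iff_insert_mem]
  exact ⟨a.castSucc, by simpa using ha, by simpa using haS⟩

lemma shadow_memberSection_subset : ∂ C.memberSection ⊆ (∂ C).memberSection := by
  intro S hS
  obtain ⟨a, ha, haS⟩ := mem_shadow_iff_insert_mem.1 hS
  rw [mem_memberSection, mem_shadow_iff_insert_mem]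
  refine ⟨a.castSucc, by simpa [Fin.castSucc_ne_last] using ha, ?_⟩
  simpa [insert_comm] using haS

lemma nonMemberSection_mono (h : C ⊆ D) : C.nonMemberSection ⊆ D.nonMemberSection :=
  fun _ hS => mem_nonMemberSection.2 (h (mem_nonMemberSection.1 hS))

lemma memberSection_mono (h : C ⊆ D) : C.memberSection ⊆ D.memberSection :=
  fun _ hS => mem_memberSection.2 (h (mem_memberSection.1 hS))

end Finset

section LowerSet

variable {n : ℕ} {C : Finset (Finset (Fin (n + 1)))}

lemma IsLowerSet.nonMemberSection (hC : IsLowerSet (C : Set (Finset (Fin (n + 1))))) :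
    IsLowerSet (C.nonMemberSection : Set (Finset (Fin n))) := fun _ _ hle hS => by
  simpa using hC (map_subset_map.2 hle) (mem_nonMemberSection.1 hS)

lemma IsLowerSet.memberSection (hC : IsLowerSet (C : Set (Finset (Fin (n + 1))))) :
    IsLowerSet (C.memberSection : Set (Finset (Fin n))) := fun _ _ hle hS => by
  simpa using hC (insert_subset_insert _ (map_subset_map.2 hle)) (mem_memberSection.1 hS)

lemma IsLowerSet.memberSection_subset_nonMemberSection
    (hC : IsLowerSet (C : Set (Finset (Fin (n + 1))))) : C.memberSection ⊆ C.nonMemberSection :=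
  fun _ hS => mem_nonMemberSection.2 (hC (subset_insert _ _) (mem_memberSection.1 hS))

end LowerSet

section Families

variable {α : Type*} [DecidableEq α]

lemma subset_singleton_empty_of_shadow_subset {C D : Finset (Finset α)}
    (hD : IsLowerSet (D : Set (Finset α))) (hD₀ : ∅ ∉ D) (h : ∂ C ⊆ D) : C ⊆ {∅} := by
  intro S hS
  rw [mem_singleton]
  by_contra hne
  obtain ⟨a, ha⟩ := nonempty_iff_ne_empty.2 hne
  exact hD₀ (hD (empty_subset _) (h (erase_mem_shadow hS ha)))

variable [Fintype α]

lemma card_upShadow_of_subset_singleton_empty {C : Finset (Finset α)} (h : C ⊆ {∅}) :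
    #(∂⁺ C) = Fintype.card α * #C := by
  rcases subset_singleton_iff.1 h with rfl | rfl
  · simp
  · have : ∂⁺ ({∅} : Finset (Finset α)) = univ.powersetCard 1 := by
      ext t
      simp [mem_upShadow_iff_exists_mem_card_add_one]
    simp [this]

lemma card_upShadow_add_one_le_card_union {A D : Finset (Finset α)} (hA : ∅ ∈ A) :
    #(∂⁺ D) + 1 ≤ #(A ∪ ∂⁺ D) := by
  have hemp : ∅ ∉ ∂⁺ D := fun h => by
    obtain ⟨s, -, a, -, has⟩ := mem_upShadow_iff.1 h
    exact insert_ne_empty a s has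
  rw [← card_insert_of_notMem hemp]
  exact card_le_card (insert_subset (mem_union_left _ hA) subset_union_right)

end Families

section Averages

variable {ι : Type*} [Fintype ι]

lemma isoProfile_expect_card_le_of_subset_singleton_empty {n : ℕ}
    {C : ι → Finset (Finset (Fin n))} (hC : ∀ m, C m ⊆ {∅}) :
    isoProfile n (𝔼 m, (#(C m) : ℝ)) ≤ 𝔼 m, (#(∂⁺ (C m)) : ℝ) := by
  simp_rw [card_upShadow_of_subset_singleton_empty (hC _), Fintype.card_fin, Nat.cast_mul,
    ← mul_expect]
  exact isoProfile_le_mul n _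

variable [Nonempty ι]

lemma isoProfile_succ_expect_card_le {n : ℕ} (C : ι → Finset (Finset (Fin (n + 1))))
    (hdown : ∀ m, IsLowerSet (C m : Set (Finset (Fin (n + 1))))) (hemp : ∀ m, ∅ ∈ C m)
    (hB : isoProfile n (𝔼 m, (#(C m).nonMemberSection : ℝ))
      ≤ 𝔼 m, (#(∂⁺ (C m).nonMemberSection) : ℝ))
    (hT : isoProfile n (𝔼 m, (#(C m).memberSection : ℝ))
      ≤ 𝔼 m, (#(∂⁺ (C m).memberSection) : ℝ)) :
    isoProfile (n + 1) (𝔼 m, (#(C m) : ℝ)) ≤ 𝔼 m, (#(∂⁺ (C m)) : ℝ) := by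
  set B := fun m => (C m).nonMemberSection
  set T := fun m => (C m).memberSection
  have hcard : 𝔼 m, (#(C m) : ℝ) = 𝔼 m, (#(B m) : ℝ) + 𝔼 m, (#(T m) : ℝ) := by
    simp_rw [card_eq_card_nonMemberSection_add_card_memberSection (C := C _), Nat.cast_add,
      expect_add_distrib, B, T]
  have hshadow : 𝔼 m, (#(∂⁺ (C m)) : ℝ)
      = 𝔼 m, (#(∂⁺ (B m)) : ℝ) + 𝔼 m, (#(B m ∪ ∂⁺ (T m)) : ℝ) := by
    simp_rw [card_eq_card_nonMemberSection_add_card_memberSection (C := ∂⁺ (C _)),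
      nonMemberSection_upShadow, memberSection_upShadow, Nat.cast_add, expect_add_distrib, B, T]
  have hTB : 𝔼 m, (#(T m) : ℝ) ≤ 𝔼 m, (#(B m) : ℝ) := expect_le_expect fun m _ => by
    exact_mod_cast card_le_card (hdown m).memberSection_subset_nonMemberSection
  have hB2 : 𝔼 m, (#(B m) : ℝ) ≤ 2 ^ n := expect_le univ_nonempty fun m _ => by
    exact_mod_cast (card_le_univ _).trans_eq (by simp)
  have hunion : max (𝔼 m, (#(B m) : ℝ)) (isoProfile n (𝔼 m, (#(T m) : ℝ)) + 1)
      ≤ 𝔼 m, (#(B m ∪ ∂⁺ (T m)) : ℝ) := by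
    refine max_le (expect_le_expect fun m _ => by exact_mod_cast card_le_card subset_union_left) ?_
    calc isoProfile n (𝔼 m, (#(T m) : ℝ)) + 1 ≤ 𝔼 m, ((#(∂⁺ (T m)) : ℝ) + 1) := by
          rw [expect_add_distrib, Fintype.expect_const]; gcongr
      _ ≤ _ := expect_le_expect fun m _ => by
          exact_mod_cast card_upShadow_add_one_le_card_union (by simpa [B] using hemp m)
  rw [hcard, hshadow]
  refine (isoProfile_succ_add_le (expect_nonneg fun m _ => by positivity) hTB hB2).trans ?_
  gcongr

theorem isoProfile_expect_card_le_expect_card_upShadow {n : ℕ} (C : ι → Finset (Finset (Fin n)))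
    (hdown : ∀ m, IsLowerSet (C m : Set (Finset (Fin n)))) (hanti : ∀ i j, ∂ (C i) ⊆ C j) :
    isoProfile n (𝔼 m, (#(C m) : ℝ)) ≤ 𝔼 m, (#(∂⁺ (C m)) : ℝ) := by
  induction n with
  | zero =>
    exact isoProfile_expect_card_le_of_subset_singleton_empty fun m S _ =>
      mem_singleton.2 (Subsingleton.elim _ _)
  | succ n ih =>
    by_cases hemp : ∃ m₀, ∅ ∉ C m₀
    · obtain ⟨m₀, hm₀⟩ := hemp
      exact isoProfile_expect_card_le_of_subset_singleton_empty fun m =>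
        subset_singleton_empty_of_shadow_subset (hdown m₀) hm₀ (hanti m m₀)
    refine isoProfile_succ_expect_card_le C hdown (not_exists_not.1 hemp) ?_ ?_
    · exact ih _ (fun m => (hdown m).nonMemberSection)
        fun i j => shadow_nonMemberSection_subset.trans (nonMemberSection_mono (hanti i j))
    · exact ih _ (fun m => (hdown m).memberSection)
        fun i j => shadow_memberSection_subset.trans (memberSection_mono (hanti i j))

end Averages

theorem stmt19 (n l : ℕ) (hl : 0 < l) (C : Fin l → Finset (Finset (Fin n)))
    (hdown : ∀ m, IsLowerSet (C m : Set (Finset (Fin n))))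
    (hanti : ∀ i j : Fin l, (C i).shadow ⊆ C j)
    (k : ℕ) (p : ℝ) (hp0 : 0 ≤ p) (hp1 : p < 1)
    (havg : (∑ m : Fin l, ((C m).card : ℝ)) / l
      = (∑ i ∈ Finset.range k, (n.choose i : ℝ)) + p * n.choose k) :
    (∑ i ∈ Finset.range k, (n.choose (i + 1) : ℝ)) + p * n.choose (k + 1)
      ≤ (∑ m : Fin l, ((C m).upShadow.card : ℝ)) / l := by
  have : Nonempty (Fin l) := ⟨⟨0, hl⟩⟩
  have key := isoProfile_expect_card_le_expect_card_upShadow C hdown hanti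
  simp only [Fintype.expect_eq_sum_div_card, Fintype.card_fin] at key
  rw [havg] at key
  rw [sum_range_choose_succ, ← isoProfile_binomSum_add n k hp0 hp1.le]
  exact key
end
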